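/- arXiv:2405.07098 — 4 statements merged into one kernel-verified Lean document; each statement's English description precedes it below -/
import Mathlib

section
/- Let x_{0,j,i} ∈ ℝ^M (i = 1,…,N_j, j = 1,…,Q, each N_j ≥ 1) be a finite training set partitioned into Q classes with labels y_1,…,y_Q ∈ ℝ^Q that are linearly independent, and suppose the class means x̄_{0,1},…,x̄_{0,Q} are linearly independent (so Q ≤ M). If the data is sequentially linearly separable, then there exist weight matrices W_1,…,W_Q ∈ ℝ^{M×M}, W_{Q+1} ∈ ℝ^{Q×M} and bias vectors b_ℓ ∈ ℝ^{d_ℓ} such that the ReLU network with L = Q+1 layers and widths d_0 = d_1 = ⋯ = d_Q = M, d_{Q+1} = Q maps every training point of class j exactly to y_j; in particular the square loss (1/2)∑_{j=1}^Q ∑_{i=1}^{N_j} |x^{(Q+1)}_{0,j,i} − y_j|² attains its global minimum value 0. -/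
open Matrix

/-- Componentwise ReLU. -/
noncomputable def relu {d : ℕ} (v : Fin d → ℝ) : Fin d → ℝ := fun i => max (v i) 0

/-- Euclidean norm on `Fin n → ℝ`. -/
noncomputable def vnorm {n : ℕ} (x : Fin n → ℝ) : ℝ := Real.sqrt (∑ i, x i * x i)

/-- Euclidean inner product on `Fin n → ℝ`. -/
def dotp {n : ℕ} (u v : Fin n → ℝ) : ℝ := ∑ k, u k * v k

/-- The hidden layers of a ReLU network of constant width `M` (0-indexed weights):
`x^{(0)} = x`, `x^{(ℓ+1)} = σ(W_{ℓ+1} x^{(ℓ)} + b_{ℓ+1})`. -/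
noncomputable def hiddenConst {M : ℕ} (W : ℕ → Matrix (Fin M) (Fin M) ℝ)
    (b : ℕ → Fin M → ℝ) : ℕ → (Fin M → ℝ) → (Fin M → ℝ)
  | 0, x => x
  | ℓ + 1, x => relu ((W ℓ).mulVec (hiddenConst W b ℓ x) + b ℓ)

/-- The mean of the points of class `j`. -/
noncomputable def classMean {M Q : ℕ} {N : Fin Q → ℕ}
    (x : ∀ j : Fin Q, Fin (N j) → Fin M → ℝ) (j : Fin Q) : Fin M → ℝ :=
  (N j : ℝ)⁻¹ • ∑ i, x j i

/-- The barycenter `x̄ = (1/Q) ∑_j x̄_{0,j}` of the class means. -/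
noncomputable def barycenter {M Q : ℕ} {N : Fin Q → ℕ}
    (x : ∀ j : Fin Q, Fin (N j) → Fin M → ℝ) : Fin M → ℝ :=
  (Q : ℝ)⁻¹ • ∑ j, classMean x j

/-- The point `p_j = t_j x̄ + (1 − t_j) x̄_{0,j}` on the segment between the barycenter and
the `j`-th class mean. -/
noncomputable def segPoint {M Q : ℕ} {N : Fin Q → ℕ}
    (x : ∀ j : Fin Q, Fin (N j) → Fin M → ℝ) (t : Fin Q → ℝ) (j : Fin Q) : Fin M → ℝ :=
  t j • barycenter x + (1 - t j) • classMean x j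

/-- Sequential linear separability: after reordering the classes by a permutation `σ`,
for each class `j` there are a base point `p_j` strictly between `x̄` and `x̄_{0,j}` and a
unit normal `h_j` such that the hyperplane through `p_j` with normal `h_j` strictly
separates class `j` from the earlier base points and all the later classes. -/
def SeqLinSep {M Q : ℕ} {N : Fin Q → ℕ}
    (x : ∀ j : Fin Q, Fin (N j) → Fin M → ℝ) : Prop :=
  ∃ σ : Equiv.Perm (Fin Q), ∃ t : Fin Q → ℝ, ∃ h : Fin Q → Fin M → ℝ,
    ∀ j : Fin Q,
      t j ∈ Set.Ioo (0 : ℝ) 1 ∧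
      vnorm (h j) = 1 ∧
      (∀ i : Fin (N j), dotp (x j i - segPoint x t j) (h j) < 0) ∧
      (∀ j' : Fin Q, σ j < σ j' →
        ∀ i : Fin (N j'), 0 < dotp (x j' i - segPoint x t j) (h j)) ∧
      (∀ j' : Fin Q, σ j' < σ j →
        0 < dotp (segPoint x t j' - segPoint x t j) (h j))

lemma relu_of_nonneg {M : ℕ} {v : Fin M → ℝ} (h : ∀ k, 0 ≤ v k) : relu v = v :=
  funext fun k => max_eq_left (h k)
lemma relu_of_nonpos {M : ℕ} {v : Fin M → ℝ} (h : ∀ k, v k ≤ 0) : relu v = 0 :=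
  funext fun k => max_eq_right (h k)
lemma dotp_eq {n : ℕ} (u v : Fin n → ℝ) : dotp u v = u ⬝ᵥ v := rfl
lemma dotp_comm {n : ℕ} (u v : Fin n → ℝ) : dotp u v = dotp v u := by
  simp [dotp, mul_comm]

lemma le_sum_of_nonneg {ι : Type*} [Fintype ι] (f : ι → ℝ) (hf : ∀ i, 0 ≤ f i) (i : ι) :
    f i ≤ ∑ j, f j := Finset.single_le_sum (fun j _ => hf j) (Finset.mem_univ i)

lemma hiddenConst_congr {M : ℕ} (W W' : ℕ → Matrix (Fin M) (Fin M) ℝ)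
    (b b' : ℕ → Fin M → ℝ) (ℓ : ℕ)
    (hW : ∀ m, m < ℓ → W m = W' m) (hb : ∀ m, m < ℓ → b m = b' m) (z : Fin M → ℝ) :
    hiddenConst W b ℓ z = hiddenConst W' b' ℓ z := by
  induction ℓ with
  | zero => rfl
  | succ n ih =>
      simp only [hiddenConst]
      rw [hW n (by omega), hb n (by omega),
        ih (fun m hm => hW m (by omega)) (fun m hm => hb m (by omega))]

lemma key_induction {M Q : ℕ} {N : Fin Q → ℕ} (x : ∀ j : Fin Q, Fin (N j) → Fin M → ℝ)
    (σ : Equiv.Perm (Fin Q)) (t : Fin Q → ℝ) (h : Fin Q → Fin M → ℝ)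
    (h3 : ∀ j i, dotp (x j i - segPoint x t j) (h j) < 0)
    (h4 : ∀ j j', σ j < σ j' → ∀ i, 0 < dotp (x j' i - segPoint x t j) (h j))
    (h5 : ∀ j j', σ j' < σ j → 0 < dotp (segPoint x t j' - segPoint x t j) (h j)) :
    ∀ ℓ, ℓ ≤ Q → ∃ (W : ℕ → Matrix (Fin M) (Fin M) ℝ) (b : ℕ → Fin M → ℝ)
      (A : Matrix (Fin M) (Fin M) ℝ) (c : Fin M → ℝ),
      IsUnit A.det ∧
      (∀ j : Fin Q, ℓ ≤ (σ j : ℕ) → ∀ i, hiddenConst W b ℓ (x j i) = A *ᵥ (x j i) + c) ∧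
      (∀ j : Fin Q, (σ j : ℕ) < ℓ → ∀ i, hiddenConst W b ℓ (x j i) = A *ᵥ (segPoint x t j) + c) := by
  intro ℓ
  induction ℓ with
  | zero =>
      intro _
      refine ⟨fun _ => 0, fun _ => 0, 1, 0, by simp, fun j _ i => ?_, fun j hj _ => by omega⟩
      show x j i = 1 *ᵥ (x j i) + 0
      rw [Matrix.one_mulVec, add_zero]
  | succ ℓ IH =>
      intro hsucc
      have hℓQ : ℓ < Q := hsucc
      obtain ⟨W, b, A, c, hA, hAlive, hColl⟩ := IH (Nat.le_of_lt hℓQ)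
      set js : Fin Q := σ.symm ⟨ℓ, hℓQ⟩ with hjsdef
      have hjs : (σ js : ℕ) = ℓ := by simp [hjsdef]
      set ps : Fin M → ℝ := segPoint x t js with hpsdef
      set hh : Fin M → ℝ := h js with hhhdef
      set w₀ : Fin M → ℝ := A *ᵥ ps + c with hw₀def
      set v : Fin M → ℝ := hh ᵥ* A⁻¹ with hvdef
      -- key transport identity
      have hAv : ∀ u : Fin M → ℝ, dotp v (A *ᵥ u) = dotp hh u := by
        intro u
        rw [dotp_eq, dotp_eq, Matrix.dotProduct_mulVec, hvdef, Matrix.vecMul_vecMul,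
          Matrix.nonsing_inv_mul A hA, Matrix.vecMul_one]
      have hφ : ∀ z : Fin M → ℝ, dotp v (A *ᵥ z + c) - dotp v w₀ = dotp (z - ps) hh := by
        intro z
        rw [hw₀def, dotp_eq, dotp_eq, dotProduct_add, dotProduct_add,
          ← dotp_eq v (A *ᵥ z), ← dotp_eq v (A *ᵥ ps), hAv, hAv]
        rw [dotp_comm (z - ps) hh, dotp_eq, dotp_eq, dotp_eq, dotProduct_sub]
        ring
      -- the quantities controlling the choice of α
      set ratioX : (j : Fin Q) → Fin (N j) → Fin M → ℝ := fun j i k =>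
        if (σ j : ℕ) = ℓ then ((A *ᵥ x j i + c) k - w₀ k) / (-(dotp (x j i - ps) hh))
        else (w₀ k - (A *ᵥ x j i + c) k) / (dotp (x j i - ps) hh) with hratioX
      set ratioP : Fin Q → Fin M → ℝ := fun j k =>
        (w₀ k - (A *ᵥ segPoint x t j + c) k) / (dotp (segPoint x t j - ps) hh) with hratioP
      set α₀ : ℝ := 1 + (∑ j, ∑ i, ∑ k, max (ratioX j i k) 0)
          + ∑ j, ∑ k, max (ratioP j k) 0 with hα₀def
      have hsum1 : (0:ℝ) ≤ ∑ j, ∑ i, ∑ k, max (ratioX j i k) 0 :=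
        Finset.sum_nonneg fun j _ => Finset.sum_nonneg fun i _ =>
          Finset.sum_nonneg fun k _ => le_max_right _ _
      have hsum2 : (0:ℝ) ≤ ∑ j, ∑ k, max (ratioP j k) 0 :=
        Finset.sum_nonneg fun j _ => Finset.sum_nonneg fun k _ => le_max_right _ _
      have hbX : ∀ j i k, ratioX j i k ≤ α₀ := by
        intro j i k
        have t1 : max (ratioX j i k) 0 ≤ ∑ k', max (ratioX j i k') 0 :=
          le_sum_of_nonneg _ (fun _ => le_max_right _ _) k
        have t2 : ∑ k', max (ratioX j i k') 0 ≤ ∑ i', ∑ k', max (ratioX j i' k') 0 :=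
          le_sum_of_nonneg (fun i' => ∑ k', max (ratioX j i' k') 0)
            (fun i' => Finset.sum_nonneg fun _ _ => le_max_right _ _) i
        have t3 : ∑ i', ∑ k', max (ratioX j i' k') 0
            ≤ ∑ j', ∑ i', ∑ k', max (ratioX j' i' k') 0 :=
          le_sum_of_nonneg (fun j' => ∑ i', ∑ k', max (ratioX j' i' k') 0)
            (fun j' => Finset.sum_nonneg fun _ _ =>
              Finset.sum_nonneg fun _ _ => le_max_right _ _) j
        have t0 : ratioX j i k ≤ max (ratioX j i k) 0 := le_max_left _ _
        rw [hα₀def]; linarith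
      have hbP : ∀ j k, ratioP j k ≤ α₀ := by
        intro j k
        have t1 : max (ratioP j k) 0 ≤ ∑ k', max (ratioP j k') 0 :=
          le_sum_of_nonneg _ (fun _ => le_max_right _ _) k
        have t2 : ∑ k', max (ratioP j k') 0 ≤ ∑ j', ∑ k', max (ratioP j' k') 0 :=
          le_sum_of_nonneg (fun j' => ∑ k', max (ratioP j' k') 0)
            (fun j' => Finset.sum_nonneg fun _ _ => le_max_right _ _) j
        have t0 : ratioP j k ≤ max (ratioP j k) 0 := le_max_left _ _
        rw [hα₀def]; linarith
      set s : ℝ := ∑ k, v k with hsdef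
      set α : ℝ := if 1 + α₀ * s = 0 then α₀ + 1 else α₀ with hαdef
      have hαα₀ : α₀ ≤ α := by
        rw [hαdef]; split <;> linarith
      have hαs : 1 + α * s ≠ 0 := by
        rw [hαdef]
        split
        next hcase =>
          have hs0 : s ≠ 0 := by
            intro h0; rw [h0, mul_zero] at hcase; linarith
          intro hcontra
          apply hs0
          have : 1 + (α₀ + 1) * s = (1 + α₀ * s) + s := by ring
          rw [this, hcase, zero_add] at hcontra
          exact hcontra
        next hcase => exact hcase
      -- the layer
      set K : Matrix (Fin M) (Fin M) ℝ := vecMulVec (fun _ => (1:ℝ)) v with hKdef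
      set Wmat : Matrix (Fin M) (Fin M) ℝ := 1 + α • K with hWmatdef
      set bvec : Fin M → ℝ := fun k => - w₀ k - α * dotp v w₀ with hbvecdef
      have hKmul : ∀ w : Fin M → ℝ, K *ᵥ w = fun _ => dotp v w := by
        intro w; funext i
        simp [hKdef, Matrix.mulVec, Matrix.vecMulVec_apply, dotProduct, dotp]
      have heval : ∀ (w : Fin M → ℝ) (k : Fin M),
          (Wmat *ᵥ w + bvec) k = w k - w₀ k + α * (dotp v w - dotp v w₀) := by
        intro w k
        rw [hWmatdef, Matrix.add_mulVec, Matrix.one_mulVec, Matrix.smul_mulVec, hKmul]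
        simp [hbvecdef]
        ring
      -- invertibility of Wmat
      have hKK : K * K = s • K := by
        ext i j
        simp only [Matrix.mul_apply, hKdef, Matrix.vecMulVec_apply, Matrix.smul_apply,
          smul_eq_mul, one_mul]
        rw [hsdef, ← Finset.sum_mul]
      set β : ℝ := α / (1 + α * s) with hβdef
      have hβcoef : α - β - α * (β * s) = 0 := by
        rw [hβdef]; field_simp; ring
      have hE1 : (α • K) * (β • K) = (α * (β * s)) • K := by
        rw [smul_mul_assoc, mul_smul_comm, hKK, smul_smul, smul_smul]
        ring_nf
      have hWinv : Wmat * (1 - β • K) = 1 := by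
        calc Wmat * (1 - β • K)
            = 1 + α • K - (β • K + (α * (β * s)) • K) := by
              rw [hWmatdef, Matrix.mul_sub, Matrix.mul_one, Matrix.add_mul, Matrix.one_mul, hE1]
          _ = 1 + (α - β - α * (β * s)) • K := by
              rw [sub_smul, sub_smul]; abel
          _ = 1 := by rw [hβcoef, zero_smul, add_zero]
      have hWunit : IsUnit Wmat.det := Matrix.isUnit_det_of_right_inverse hWinv
      -- new affine data
      set A' : Matrix (Fin M) (Fin M) ℝ := Wmat * A with hA'def
      set c' : Fin M → ℝ := Wmat *ᵥ c + bvec with hc'def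
      have hA'unit : IsUnit A'.det := by
        rw [hA'def, Matrix.det_mul]; exact hWunit.mul hA
      have haff : ∀ z : Fin M → ℝ, Wmat *ᵥ (A *ᵥ z + c) + bvec = A' *ᵥ z + c' := by
        intro z
        rw [Matrix.mulVec_add, Matrix.mulVec_mulVec, hc'def]
        rw [add_assoc]
      have hmain : ∀ (z : Fin M → ℝ) (k : Fin M),
          (Wmat *ᵥ (A *ᵥ z + c) + bvec) k
            = (A *ᵥ z + c) k - w₀ k + α * dotp (z - ps) hh := by
        intro z k
        rw [heval, hφ]
      -- the new weights
      set W' : ℕ → Matrix (Fin M) (Fin M) ℝ := Function.update W ℓ Wmat with hW'def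
      set b' : ℕ → Fin M → ℝ := Function.update b ℓ bvec with hb'def
      have hhid : ∀ z : Fin M → ℝ,
          hiddenConst W' b' (ℓ + 1) z = relu (Wmat *ᵥ (hiddenConst W b ℓ z) + bvec) := by
        intro z
        show relu ((W' ℓ) *ᵥ (hiddenConst W' b' ℓ z) + b' ℓ) = _
        rw [hW'def, hb'def, Function.update_self, Function.update_self]
        rw [hiddenConst_congr W' W b' b ℓ
          (fun m hm => by rw [hW'def, Function.update_of_ne (Nat.ne_of_lt hm)])
          (fun m hm => by rw [hb'def, Function.update_of_ne (Nat.ne_of_lt hm)]) z]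
      -- relu consequences
      have hrelu_id : ∀ z : Fin M → ℝ,
          (∀ k, 0 ≤ (A *ᵥ z + c) k - w₀ k + α * dotp (z - ps) hh) →
          relu (Wmat *ᵥ (A *ᵥ z + c) + bvec) = A' *ᵥ z + c' := by
        intro z hz
        rw [relu_of_nonneg (fun k => by rw [hmain]; exact hz k), haff]
      have hcollapse : A' *ᵥ ps + c' = 0 := by
        rw [← haff ps]
        funext k
        simp only [Pi.zero_apply]
        rw [hmain ps k]
        have : ps - ps = 0 := sub_self ps
        rw [this]
        have hd0 : dotp (0 : Fin M → ℝ) hh = 0 := by simp [dotp]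
        rw [hd0, hw₀def]
        ring
      refine ⟨W', b', A', c', hA'unit, ?_, ?_⟩
      · -- alive classes
        intro j hj i
        have hcur := hAlive j (by omega) i
        have hd : 0 < dotp (x j i - ps) hh := by
          refine h4 js j ?_ i
          rw [Fin.lt_def, hjs]
          omega
        have hσj : ¬ ((σ j : ℕ) = ℓ) := by omega
        have hineq : ∀ k, 0 ≤ (A *ᵥ x j i + c) k - w₀ k + α * dotp (x j i - ps) hh := by
          intro k
          have hr := hbX j i k
          rw [hratioX] at hr
          simp only [hσj, if_false] at hr
          have := (div_le_iff₀ hd).mp (le_trans hr hαα₀)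
          linarith
        rw [hhid, hcur, hrelu_id (x j i) hineq]
      · -- collapsed classes
        intro j hj i
        rcases (by omega : (σ j : ℕ) < ℓ ∨ (σ j : ℕ) = ℓ) with hcase | hcase
        · -- previously collapsed
          have hcur := hColl j hcase i
          have hd : 0 < dotp (segPoint x t j - ps) hh := by
            refine h5 js j ?_
            rw [Fin.lt_def, hjs]
            omega
          have hineq : ∀ k, 0 ≤ (A *ᵥ segPoint x t j + c) k - w₀ k
              + α * dotp (segPoint x t j - ps) hh := by
            intro k
            have hr := hbP j k
            rw [hratioP] at hr
            have := (div_le_iff₀ hd).mp (le_trans hr hαα₀)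
            linarith
          rw [hhid, hcur, hrelu_id (segPoint x t j) hineq]
        · -- collapsed right now: j = js
          have hjjs : j = js := by
            have : σ j = σ js := by
              rw [Fin.ext_iff, hjs, hcase]
            exact σ.injective this
          subst hjjs
          have hcur := hAlive js (by omega) i
          have hd : dotp (x js i - ps) hh < 0 := by
            have := h3 js i
            rwa [← hpsdef, ← hhhdef] at this
          have hineq : ∀ k, (A *ᵥ x js i + c) k - w₀ k + α * dotp (x js i - ps) hh ≤ 0 := by
            intro k
            have hr := hbX js i k
            rw [hratioX] at hr
            simp only [hjs, if_true] at hr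
            have := (div_le_iff₀ (by linarith : (0:ℝ) < -dotp (x js i - ps) hh)).mp
              (le_trans hr hαα₀)
            linarith
          rw [hhid, hcur]
          rw [relu_of_nonpos (fun k => by rw [hmain]; exact hineq k)]
          rw [← hpsdef, hcollapse]

lemma segPoint_li {M Q : ℕ} {N : Fin Q → ℕ}
    (x : ∀ j : Fin Q, Fin (N j) → Fin M → ℝ) (t : Fin Q → ℝ)
    (ht : ∀ j, t j ∈ Set.Ioo (0:ℝ) 1)
    (hmeans : LinearIndependent ℝ (classMean x)) :
    LinearIndependent ℝ (segPoint x t) := by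
  rw [Fintype.linearIndependent_iff] at hmeans ⊢
  intro g hg j0
  have h1t : ∀ j, (0:ℝ) < 1 - t j := fun j => by have := (ht j).2; linarith
  set c : ℝ := (∑ k, g k * t k) * (Q:ℝ)⁻¹ with hc
  have e1 : ∑ j, g j • segPoint x t j = ∑ j, (c + g j * (1 - t j)) • classMean x j := by
    calc ∑ j, g j • segPoint x t j
        = ∑ j, ((g j * t j) • barycenter x + (g j * (1 - t j)) • classMean x j) := by
          refine Finset.sum_congr rfl fun j _ => ?_
          simp only [segPoint, smul_add, smul_smul]
      _ = (∑ j, g j * t j) • barycenter x + ∑ j, (g j * (1 - t j)) • classMean x j := by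
          rw [Finset.sum_add_distrib, Finset.sum_smul]
      _ = ∑ j, c • classMean x j + ∑ j, (g j * (1 - t j)) • classMean x j := by
          rw [barycenter, smul_smul, ← hc, Finset.smul_sum]
      _ = ∑ j, (c + g j * (1 - t j)) • classMean x j := by
          rw [← Finset.sum_add_distrib]
          exact Finset.sum_congr rfl fun j _ => (add_smul _ _ _).symm
  have hz : ∀ j, c + g j * (1 - t j) = 0 := hmeans _ (by rw [← e1, hg])
  have hgj : ∀ j, g j = -c / (1 - t j) := by
    intro j
    rw [eq_div_iff (ne_of_gt (h1t j))]
    linarith [hz j]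
  have hsum : ∑ k, g k * t k = -c * ∑ k, t k / (1 - t k) := by
    rw [Finset.mul_sum]
    refine Finset.sum_congr rfl fun k _ => ?_
    rw [hgj k, div_mul_eq_mul_div, mul_div_assoc]
  have hS : (0:ℝ) ≤ ∑ k, t k / (1 - t k) :=
    Finset.sum_nonneg fun k _ => div_nonneg (le_of_lt (ht k).1) (le_of_lt (h1t k))
  have hceq : c * (1 + (∑ k, t k / (1 - t k)) * (Q:ℝ)⁻¹) = 0 := by
    rw [hc]
    linear_combination hsum * (Q:ℝ)⁻¹
  have hc0 : c = 0 := by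
    have hpos : (0:ℝ) < 1 + (∑ k, t k / (1 - t k)) * (Q:ℝ)⁻¹ := by
      have : (0:ℝ) ≤ (∑ k, t k / (1 - t k)) * (Q:ℝ)⁻¹ := mul_nonneg hS (by positivity)
      linarith
    exact (mul_eq_zero.mp hceq).resolve_right (ne_of_gt hpos)
  have h0 : g j0 * (1 - t j0) = 0 := by have := hz j0; rw [hc0] at this; linarith
  rcases mul_eq_zero.mp h0 with h | h
  · exact h
  · exfalso; linarith [h1t j0]

lemma exists_linMap {n m p : ℕ} (q : Fin p → Fin n → ℝ) (y : Fin p → Fin m → ℝ)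
    (hq : LinearIndependent ℝ q) :
    ∃ f : (Fin n → ℝ) →ₗ[ℝ] (Fin m → ℝ), ∀ j, f (q j) = y j := by
  obtain ⟨s', hs'⟩ := Submodule.exists_isCompl (Submodule.span ℝ (Set.range q))
  refine ⟨((Module.Basis.span hq).constr ℝ y) ∘ₗ
    ((Submodule.span ℝ (Set.range q)).projectionOnto s' hs'), fun j => ?_⟩
  have hm : q j ∈ Submodule.span ℝ (Set.range q) := Submodule.subset_span ⟨j, rfl⟩
  have h1 : ((Submodule.span ℝ (Set.range q)).projectionOnto s' hs') (q j)
      = Module.Basis.span hq j := by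
    have := Submodule.linearProjOfIsCompl_apply_left hs' ⟨q j, hm⟩
    rw [show ((⟨q j, hm⟩ : Submodule.span ℝ (Set.range q)) : Fin n → ℝ) = q j from rfl] at this
    rw [this]
    ext
    simp [Module.Basis.span_apply]
  simp only [LinearMap.comp_apply, h1, Module.Basis.constr_basis]

/-- for sequentially linearly separable data with linearly independent labels
and linearly independent class means, there is a ReLU network with `Q+1` layers of widths
`d_0 = ⋯ = d_Q = M`, `d_{Q+1} = Q` mapping every point of class `j` exactly to `y_j`;
in particular the square loss attains its global minimum value `0`. -/
theorem zero_loss_of_seqLinSep {M Q : ℕ} (N : Fin Q → ℕ) (hN : ∀ j, 1 ≤ N j)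
    (x : ∀ j : Fin Q, Fin (N j) → Fin M → ℝ) (y : Fin Q → Fin Q → ℝ)
    (hy : LinearIndependent ℝ y)
    (hmeans : LinearIndependent ℝ (classMean x))
    (hsep : SeqLinSep x) :
    ∃ (W : ℕ → Matrix (Fin M) (Fin M) ℝ) (b : ℕ → Fin M → ℝ)
      (Wlast : Matrix (Fin Q) (Fin M) ℝ) (blast : Fin Q → ℝ),
      (∀ j i, Wlast.mulVec (hiddenConst W b Q (x j i)) + blast = y j) ∧
      (1 / 2) * ∑ j, ∑ i,
          vnorm (Wlast.mulVec (hiddenConst W b Q (x j i)) + blast - y j) ^ 2 = 0 := by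
  obtain ⟨σ, t, h, hsep'⟩ := hsep
  have ht : ∀ j, t j ∈ Set.Ioo (0:ℝ) 1 := fun j => (hsep' j).1
  have h3 : ∀ j i, dotp (x j i - segPoint x t j) (h j) < 0 := fun j => (hsep' j).2.2.1
  have h4 : ∀ j j', σ j < σ j' → ∀ i, 0 < dotp (x j' i - segPoint x t j) (h j) :=
    fun j j' hlt i => (hsep' j).2.2.2.1 j' hlt i
  have h5 : ∀ j j', σ j' < σ j → 0 < dotp (segPoint x t j' - segPoint x t j) (h j) :=
    fun j j' hlt => (hsep' j).2.2.2.2 j' hlt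
  obtain ⟨W, b, A, c, hA, _, hColl⟩ := key_induction x σ t h h3 h4 h5 Q le_rfl
  have hall : ∀ j i, hiddenConst W b Q (x j i) = A *ᵥ segPoint x t j + c :=
    fun j i => hColl j (σ j).isLt i
  -- linear independence of the collapsed points
  have hp : LinearIndependent ℝ (segPoint x t) := segPoint_li x t ht hmeans
  have hinj : Function.Injective (fun u : Fin M → ℝ => A *ᵥ u) := by
    intro u w huw
    have huw' : A *ᵥ u = A *ᵥ w := huw
    have h2 : A⁻¹ *ᵥ (A *ᵥ u) = A⁻¹ *ᵥ (A *ᵥ w) := by rw [huw']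
    rwa [Matrix.mulVec_mulVec, Matrix.mulVec_mulVec, Matrix.nonsing_inv_mul A hA,
      Matrix.one_mulVec, Matrix.one_mulVec] at h2
  have hq : LinearIndependent ℝ (fun j => A *ᵥ segPoint x t j) := by
    have : (fun j => A *ᵥ segPoint x t j) = (Matrix.mulVecLin A) ∘ (segPoint x t) := by
      funext j; simp [Matrix.mulVecLin_apply]
    rw [this]
    exact LinearIndependent.map' hp (Matrix.mulVecLin A)
      (LinearMap.ker_eq_bot.mpr (by intro u w huw; exact hinj (by simpa using huw)))
  obtain ⟨f, hf⟩ := exists_linMap (fun j => A *ᵥ segPoint x t j) y hq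
  have hWlast : ∀ w : Fin M → ℝ, (LinearMap.toMatrix' f) *ᵥ w = f w := by
    intro w
    rw [← Matrix.toLin'_apply, Matrix.toLin'_toMatrix']
  refine ⟨W, b, LinearMap.toMatrix' f, -(f c), ?_, ?_⟩
  · intro j i
    rw [hall j i, hWlast, map_add, hf j]
    abel
  · have hzero : ∀ j i, vnorm ((LinearMap.toMatrix' f) *ᵥ (hiddenConst W b Q (x j i))
        + -(f c) - y j) ^ 2 = 0 := by
      intro j i
      rw [hall j i, hWlast, map_add, hf j]
      have : y j + f c + -(f c) - y j = 0 := by abel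
      rw [this]
      simp [vnorm]
    rw [Finset.sum_eq_zero (fun j _ => Finset.sum_eq_zero (fun i _ => hzero j i)), mul_zero]
end

section
/- Let x_{0,j,i} ∈ ℝ^M (i = 1,…,N_j, j = 1,…,Q, each N_j ≥ 1) be a finite training set partitioned into Q classes with labels y_1,…,y_Q ∈ ℝ^Q that are linearly independent, and suppose the class means x̄_{0,1},…,x̄_{0,Q} are linearly independent (so Q ≤ M). Assume the clustering conditions: (i) δ < c_0 · min_j |x̄_{0,j} − x̄| for some c_0 ∈ (0, 1/4), and (ii) there exists θ_* ∈ [π/2, π) such that for every j, the union over j' ≠ j of the closed balls of radius 4δ centered at x̄_{0,j'} is contained in x̄_{0,j} + C_{θ_*}[f_j]. Then for any widths M = d_0 ≥ d_1 ≥ ⋯ ≥ d_Q ≥ Q and d_{Q+1} = Q, there exist weight matrices W_ℓ ∈ ℝ^{d_ℓ×d_{ℓ−1}} and bias vectors b_ℓ ∈ ℝ^{d_ℓ} (ℓ = 1,…,Q+1) such that the ReLU network with L = Q+1 layers maps every training point of class j exactly to y_j, i.e. the square loss (1/2)∑_{j,i}|x^{(Q+1)}_{0,j,i} − y_j|² attains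 its global minimum value 0. -/
open Matrix

/-- The angle between two vectors: `arccos(⟨x,h⟩/(|x||h|))`. -/
noncomputable def angle' {n : ℕ} (x h : Fin n → ℝ) : ℝ :=
  Real.arccos ((∑ i, x i * h i) / (vnorm x * vnorm h))

/-- Membership in the cone `C_θ[h] = {x : angle(x,h) ≤ θ/2}` (by convention `0 ∈ C_θ[h]`). -/
def inCone {n : ℕ} (θ : ℝ) (h : Fin n → ℝ) (x : Fin n → ℝ) : Prop :=
  x = 0 ∨ angle' x h ≤ θ / 2

/-- The hidden layers of a ReLU network with widths `d 0, d 1, …` (0-indexed weights):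
`x^{(0)} = x`, `x^{(ℓ+1)} = σ(W_{ℓ+1} x^{(ℓ)} + b_{ℓ+1})`. -/
noncomputable def netHidden (d : ℕ → ℕ)
    (W : ∀ ℓ : ℕ, Matrix (Fin (d (ℓ + 1))) (Fin (d ℓ)) ℝ)
    (b : ∀ ℓ : ℕ, Fin (d (ℓ + 1)) → ℝ) :
    (ℓ : ℕ) → (Fin (d 0) → ℝ) → (Fin (d ℓ) → ℝ)
  | 0, x => x
  | ℓ + 1, x => relu ((W ℓ).mulVec (netHidden d W b ℓ x) + b ℓ)

/-- The unit vector `f_j = (x̄ − x̄_{0,j})/|x̄ − x̄_{0,j}|`. -/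
noncomputable def unitDir {M Q : ℕ} {N : Fin Q → ℕ}
    (x : ∀ j : Fin Q, Fin (N j) → Fin M → ℝ) (j : Fin Q) : Fin M → ℝ :=
  (vnorm (barycenter x - classMean x j))⁻¹ • (barycenter x - classMean x j)

lemma vnorm_nonneg {n : ℕ} (u : Fin n → ℝ) : 0 ≤ vnorm u := Real.sqrt_nonneg _

lemma sum_sq_nonneg {n : ℕ} (u : Fin n → ℝ) : 0 ≤ ∑ i, u i * u i :=
  Finset.sum_nonneg fun i _ => mul_self_nonneg _

lemma vnorm_sq {n : ℕ} (u : Fin n → ℝ) : vnorm u * vnorm u = ∑ i, u i * u i :=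
  Real.mul_self_sqrt (sum_sq_nonneg u)

lemma vnorm_eq_zero {n : ℕ} {u : Fin n → ℝ} (h : vnorm u = 0) : u = 0 := by
  have h2 : ∑ i, u i * u i = 0 := by
    have := vnorm_sq u
    rw [h] at this; linarith
  funext i
  have := (Finset.sum_eq_zero_iff_of_nonneg (fun i _ => mul_self_nonneg (u i))).1 h2 i
    (Finset.mem_univ i)
  have : u i = 0 := by nlinarith [this]
  simpa using this

lemma vnorm_smul {n : ℕ} (c : ℝ) (u : Fin n → ℝ) : vnorm (c • u) = |c| * vnorm u := by
  unfold vnorm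
  rw [← Real.sqrt_sq_eq_abs, ← Real.sqrt_mul (sq_nonneg c)]
  congr 1
  rw [Finset.mul_sum]
  apply Finset.sum_congr rfl
  intro i _
  simp [Pi.smul_apply, smul_eq_mul]; ring

lemma cs {n : ℕ} (u v : Fin n → ℝ) : ∑ i, u i * v i ≤ vnorm u * vnorm v := by
  have h := Finset.sum_mul_sq_le_sq_mul_sq Finset.univ u v
  have h1 : ∑ i, u i * v i ≤ |∑ i, u i * v i| := le_abs_self _
  have h2 : |∑ i, u i * v i| = Real.sqrt ((∑ i, u i * v i) ^ 2) :=
    (Real.sqrt_sq_eq_abs _).symm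
  rw [h2] at h1
  refine h1.trans ?_
  have : vnorm u * vnorm v = Real.sqrt ((∑ i, u i ^ 2) * ∑ i, v i ^ 2) := by
    unfold vnorm
    rw [Real.sqrt_mul (Finset.sum_nonneg fun i _ => sq_nonneg (u i))]
    congr 2 <;> (apply Finset.sum_congr rfl; intro i _; ring)
  rw [this]
  exact Real.sqrt_le_sqrt h

lemma vnorm_add_le {n : ℕ} (u v : Fin n → ℝ) : vnorm (u + v) ≤ vnorm u + vnorm v := by
  have key : ∑ i, (u + v) i * (u + v) i ≤ (vnorm u + vnorm v) * (vnorm u + vnorm v) := by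
    have e : ∑ i, (u + v) i * (u + v) i
        = (∑ i, u i * u i) + 2 * (∑ i, u i * v i) + ∑ i, v i * v i := by
      rw [Finset.mul_sum, ← Finset.sum_add_distrib, ← Finset.sum_add_distrib]
      apply Finset.sum_congr rfl
      intro i _; simp [Pi.add_apply]; ring
    have hcs := cs u v
    have hu := vnorm_sq u
    have hv := vnorm_sq v
    nlinarith
  have : vnorm (u + v) = Real.sqrt (∑ i, (u + v) i * (u + v) i) := rfl
  rw [this]
  have h2 : Real.sqrt (∑ i, (u + v) i * (u + v) i)
      ≤ Real.sqrt ((vnorm u + vnorm v) * (vnorm u + vnorm v)) := Real.sqrt_le_sqrt key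
  refine h2.trans_eq ?_
  exact Real.sqrt_mul_self (add_nonneg (vnorm_nonneg u) (vnorm_nonneg v))

lemma sum_mul_indicator {n a : ℕ} (ha : a < n) (F : Fin n → ℝ) :
    ∑ s : Fin n, F s * (if (s : ℕ) = a then (1:ℝ) else 0) = F ⟨a, ha⟩ := by
  rw [Finset.sum_eq_single ⟨a, ha⟩]
  · simp
  · intro s _ hs
    have : (s : ℕ) ≠ a := fun h => hs (Fin.ext h)
    simp [this]
  · simp

lemma mulVec_select {m n Q : ℕ} (w : ℝ) (v : Fin n → ℝ) (t : Fin m) (h : Q ≤ n) :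
    ∑ s : Fin n, (if (t : ℕ) = (s : ℕ) ∧ (s : ℕ) < Q then w else 0) * v s
      = if h' : (t : ℕ) < Q then w * v ⟨t, lt_of_lt_of_le h' h⟩ else 0 := by
  by_cases h' : (t : ℕ) < Q
  · rw [dif_pos h', Finset.sum_eq_single (⟨t, lt_of_lt_of_le h' h⟩ : Fin n)]
    · simp [h']
    · intro s _ hs
      have : (t : ℕ) ≠ (s : ℕ) := by
        intro he; exact hs (Fin.ext he.symm)
      simp [this]
    · simp
  · rw [dif_neg h']
    apply Finset.sum_eq_zero
    intro s _
    have : ¬((t : ℕ) = (s : ℕ) ∧ (s : ℕ) < Q) := by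
      rintro ⟨he, hlt⟩; exact h' (he ▸ hlt)
    simp [this]

lemma key_margin {M Q : ℕ} {N : Fin Q → ℕ}
    (x : ∀ j : Fin Q, Fin (N j) → Fin M → ℝ)
    (hmeans : LinearIndependent ℝ (classMean x))
    (δ : ℝ) (hδ0 : 0 ≤ δ)
    (hδ : ∀ j i, vnorm (x j i - classMean x j) ≤ δ)
    (funit : ∀ r, ∑ k, unitDir x r k * unitDir x r k = 1)
    (θs : ℝ) (hθs2 : θs < Real.pi)
    (hcone : ∀ j j' : Fin Q, j' ≠ j → ∀ z : Fin M → ℝ,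
      vnorm (z - classMean x j') ≤ 4 * δ → inCone θs (unitDir x j) (z - classMean x j)) :
    ∀ (j : Fin Q) (i : Fin (N j)) (r : Fin Q), r ≠ j →
      δ < ∑ k, unitDir x r k * (x j i k - classMean x r k) := by
  intro j i r hrj
  set f := unitDir x with hf
  set z := x j i with hzdef
  set w : Fin M → ℝ := z - (3 * δ) • f r with hwdef
  have hfn : vnorm (f r) = 1 := by
    have h1 := funit r
    have h2 : vnorm (f r) * vnorm (f r) = 1 := by rw [vnorm_sq]; exact h1
    nlinarith [vnorm_nonneg (f r)]
  have hw : vnorm (w - classMean x j) ≤ 4 * δ := by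
    have he : w - classMean x j = (z - classMean x j) + (-(3 * δ)) • f r := by
      funext k
      simp only [hwdef, Pi.sub_apply, Pi.add_apply, Pi.smul_apply, smul_eq_mul]
      ring
    rw [he]
    have h1 := vnorm_add_le (z - classMean x j) ((-(3 * δ)) • f r)
    have h2 : vnorm ((-(3 * δ)) • f r) = 3 * δ := by
      rw [vnorm_smul, hfn, abs_neg, abs_of_nonneg (by linarith)]
      ring
    have h3 := hδ j i
    rw [h2] at h1
    calc vnorm ((z - classMean x j) + (-(3 * δ)) • f r)
        ≤ vnorm (z - classMean x j) + 3 * δ := h1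
      _ ≤ δ + 3 * δ := by linarith [hδ j i]
      _ = 4 * δ := by ring
  have hc := hcone r j hrj.symm w hw
  rcases hc with h0 | hang
  · -- w = classMean x r
    have hz : ∀ k, z k - classMean x r k = 3 * δ * f r k := by
      intro k
      have := congrFun h0 k
      simp only [hwdef, Pi.sub_apply, Pi.smul_apply, smul_eq_mul, Pi.zero_apply] at this
      linarith
    have hA : ∑ k, f r k * (z k - classMean x r k) = 3 * δ := by
      have : ∀ k ∈ Finset.univ, f r k * (z k - classMean x r k)
          = 3 * δ * (f r k * f r k) := by
        intro k _; rw [hz k]; ring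
      rw [Finset.sum_congr rfl this, ← Finset.mul_sum, funit r, mul_one]
    rw [hA]
    rcases eq_or_lt_of_le hδ0 with hδe | hδp
    · exfalso
      have hzj : z - classMean x j = 0 := by
        apply vnorm_eq_zero
        have := hδ j i
        have hn := vnorm_nonneg (z - classMean x j)
        linarith [hδe]
      have hzr : z - classMean x r = 0 := by
        funext k
        have := hz k
        simp only [Pi.sub_apply, Pi.zero_apply]
        rw [← hδe] at this
        simpa using this
      have hmeq : classMean x j = classMean x r := by
        have h1 : z = classMean x j := by
          funext k; have := congrFun hzj k
          simp only [Pi.sub_apply, Pi.zero_apply] at this; linarith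
        have h2 : z = classMean x r := by
          funext k; have := congrFun hzr k
          simp only [Pi.sub_apply, Pi.zero_apply] at this; linarith
        rw [← h1, ← h2]
      exact hrj (hmeans.injective hmeq).symm
    · linarith
  · -- angle branch
    unfold angle' at hang
    set u := w - classMean x r with hu
    have hlt : Real.arccos ((∑ k, u k * f r k) / (vnorm u * vnorm (f r)))
        < Real.pi / 2 := lt_of_le_of_lt hang (by linarith)
    have ht : 0 < (∑ k, u k * f r k) / (vnorm u * vnorm (f r)) :=
      Real.arccos_lt_pi_div_two.mp hlt
    have hden : 0 ≤ vnorm u * vnorm (f r) :=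
      mul_nonneg (vnorm_nonneg _) (vnorm_nonneg _)
    have hnum : 0 < ∑ k, u k * f r k := by
      rcases div_pos_iff.mp ht with ⟨h1, _⟩ | ⟨_, h2⟩
      · exact h1
      · linarith
    have expand : ∑ k, f r k * (z k - classMean x r k)
        = (∑ k, u k * f r k) + 3 * δ * ∑ k, f r k * f r k := by
      rw [Finset.mul_sum, ← Finset.sum_add_distrib]
      apply Finset.sum_congr rfl
      intro k _
      simp only [hu, hwdef, Pi.sub_apply, Pi.smul_apply, smul_eq_mul]
      ring
    have : δ < ∑ k, f r k * (z k - classMean x r k) := by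
      rw [expand, funit r]
      nlinarith
    exact this

/-- under the clustering conditions, for any monotonically decreasing widths
`M = d_0 ≥ d_1 ≥ ⋯ ≥ d_Q ≥ Q`, `d_{Q+1} = Q`, there is a ReLU network with `Q+1` layers
mapping every point of class `j` exactly to `y_j`; in particular the square loss attains
its global minimum value `0`. -/
theorem zero_loss_of_clustered_decreasing_widths {M Q : ℕ} (N : Fin Q → ℕ)
    (hN : ∀ j, 1 ≤ N j)
    (x : ∀ j : Fin Q, Fin (N j) → Fin M → ℝ) (y : Fin Q → Fin Q → ℝ)
    (hy : LinearIndependent ℝ y)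
    (hmeans : LinearIndependent ℝ (classMean x))
    -- δ bounds all deviations from the class means
    (δ : ℝ) (hδ : ∀ j i, vnorm (x j i - classMean x j) ≤ δ)
    -- clustering condition (i): δ < c₀ · min_j |x̄_{0,j} − x̄| with c₀ ∈ (0, 1/4)
    (c0 : ℝ) (hc0 : 0 < c0) (hc0' : c0 < 1 / 4)
    (hsmall : ∀ j, δ < c0 * vnorm (classMean x j - barycenter x))
    -- clustering condition (ii): a common angle θ⋆ ∈ [π/2, π) such that for each j the
    -- 4δ-balls around the other class means lie in the cone x̄_{0,j} + C_{θ⋆}[f_j]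
    (θs : ℝ) (hθs1 : Real.pi / 2 ≤ θs) (hθs2 : θs < Real.pi)
    (hcone : ∀ j j' : Fin Q, j' ≠ j → ∀ z : Fin M → ℝ,
      vnorm (z - classMean x j') ≤ 4 * δ → inCone θs (unitDir x j) (z - classMean x j)) :
    ∀ (d : ℕ → ℕ) (hd0 : d 0 = M) (hdL : d (Q + 1) = Q),
      (∀ ℓ : ℕ, ℓ ≤ Q → d (ℓ + 1) ≤ d ℓ) →
      (∀ ℓ : ℕ, ℓ ≤ Q + 1 → Q ≤ d ℓ) →
      ∃ (W : ∀ ℓ : ℕ, Matrix (Fin (d (ℓ + 1))) (Fin (d ℓ)) ℝ)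
        (b : ∀ ℓ : ℕ, Fin (d (ℓ + 1)) → ℝ),
        (∀ j i,
          (W Q).mulVec (netHidden d W b Q (fun k => x j i (Fin.cast hd0 k))) + b Q
            = fun r => y j (Fin.cast hdL r)) ∧
        (1 / 2) * ∑ j, ∑ i,
            vnorm ((W Q).mulVec (netHidden d W b Q (fun k => x j i (Fin.cast hd0 k)))
              + b Q - fun r => y j (Fin.cast hdL r)) ^ 2 = 0 := by
  
  intro d hd0 hdL hmono hQle
  suffices hex : ∃ (W : ∀ ℓ : ℕ, Matrix (Fin (d (ℓ + 1))) (Fin (d ℓ)) ℝ)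
      (b : ∀ ℓ : ℕ, Fin (d (ℓ + 1)) → ℝ),
      (∀ j i,
        (W Q).mulVec (netHidden d W b Q (fun k => x j i (Fin.cast hd0 k))) + b Q
          = fun r => y j (Fin.cast hdL r)) by
    obtain ⟨W, b, h1⟩ := hex
    refine ⟨W, b, h1, ?_⟩
    have hzero : ∑ j, ∑ i,
        vnorm ((W Q).mulVec (netHidden d W b Q (fun k => x j i (Fin.cast hd0 k)))
          + b Q - fun r => y j (Fin.cast hdL r)) ^ 2 = 0 := by
      apply Finset.sum_eq_zero
      intro j _
      apply Finset.sum_eq_zero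
      intro i _
      rw [h1 j i, sub_self]
      have : vnorm (0 : Fin (d (Q + 1)) → ℝ) = 0 := by
        unfold vnorm; simp
      rw [this]; ring
    rw [hzero, mul_zero]
  rcases Nat.lt_or_ge Q 2 with hQlt | hQ2
  · -- Q = 0 or Q = 1
    interval_cases Q
    · exact ⟨fun ℓ => 0, fun ℓ => 0, fun j => j.elim0⟩
    · refine ⟨fun _ => 0,
        fun ℓ => if ℓ = 1 then (fun _ => y ⟨0, Nat.one_pos⟩ ⟨0, Nat.one_pos⟩) else 0, ?_⟩
      intro j i
      funext r
      simp only [Matrix.zero_mulVec, zero_add, Pi.add_apply, Pi.zero_apply, reduceIte, zero_add]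
      have h1 : j = ⟨0, Nat.one_pos⟩ := by
        apply Fin.ext
        have := j.isLt
        omega
      have h2 : Fin.cast hdL r = ⟨0, Nat.one_pos⟩ := by
        apply Fin.ext
        rw [Fin.coe_cast]
        show (r : ℕ) = 0
        have h4 := r.isLt
        omega
      rw [h1, h2]
  · -- main case : 2 ≤ Q
    have hQpos : 0 < Q := by omega
    have hδ0 : 0 ≤ δ :=
      le_trans (vnorm_nonneg _) (hδ ⟨0, hQpos⟩ ⟨0, hN ⟨0, hQpos⟩⟩)
    set f := unitDir x with hf
    have funit : ∀ r, ∑ k, f r k * f r k = 1 := by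
      intro r
      have h1 : 0 < vnorm (classMean x r - barycenter x) := by
        by_contra hle
        push_neg at hle
        have h0 : vnorm (classMean x r - barycenter x) = 0 :=
          le_antisymm hle (vnorm_nonneg _)
        have := hsmall r
        rw [h0, mul_zero] at this
        linarith
      have h2 : vnorm (barycenter x - classMean x r)
          = vnorm (classMean x r - barycenter x) := by
        unfold vnorm
        congr 1
        apply Finset.sum_congr rfl
        intro k _
        simp only [Pi.sub_apply]
        ring
      have hn : 0 < vnorm (barycenter x - classMean x r) := h2 ▸ h1
      have hvs := vnorm_sq (barycenter x - classMean x r)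
      rw [hf]
      unfold unitDir
      have : ∀ k ∈ Finset.univ,
          ((vnorm (barycenter x - classMean x r))⁻¹ • (barycenter x - classMean x r)) k
            * ((vnorm (barycenter x - classMean x r))⁻¹ • (barycenter x - classMean x r)) k
          = (vnorm (barycenter x - classMean x r))⁻¹
            * (vnorm (barycenter x - classMean x r))⁻¹
            * ((barycenter x - classMean x r) k * (barycenter x - classMean x r) k) := by
        intro k _
        simp only [Pi.smul_apply, smul_eq_mul]
        ring
      rw [Finset.sum_congr rfl this, ← Finset.mul_sum, ← hvs]
      field_simp
    have funitn : ∀ r, vnorm (f r) = 1 := by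
      intro r
      have h := vnorm_sq (f r)
      rw [funit r] at h
      have h2 : (vnorm (f r) - 1) * (vnorm (f r) + 1) = 0 := by nlinarith
      rcases mul_eq_zero.mp h2 with h3 | h3
      · linarith
      · linarith [vnorm_nonneg (f r)]
    have key : ∀ (j : Fin Q) (i : Fin (N j)) (r : Fin Q), r ≠ j →
        δ < ∑ k, f r k * (x j i k - classMean x r k) :=
      key_margin x hmeans δ hδ0 hδ funit θs hθs2 hcone
    set A : ∀ j : Fin Q, Fin (N j) → Fin Q → ℝ :=
      fun j i r => ∑ k, f r k * (x j i k - classMean x r k) with hA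
    have hAj : ∀ j i, A j i j ≤ δ := by
      intro j i
      have h1 := cs (f j) (x j i - classMean x j)
      rw [funitn j, one_mul] at h1
      exact le_trans (le_of_eq (rfl :
        A j i j = ∑ k, f j k * (x j i - classMean x j) k)) (le_trans h1 (hδ j i))
    obtain ⟨K, hK⟩ := Finite.exists_le
      (fun p : (Σ j : Fin Q, Fin (N j)) × Fin Q => (A p.1.1 p.1.2 p.2 - δ)⁻¹)
    have hKP : ∀ (j : Fin Q) (i : Fin (N j)) (r : Fin Q), r ≠ j →
        1 ≤ K * (A j i r - δ) := by
      intro j i r hr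
      have hp : 0 < A j i r - δ := sub_pos.mpr (key j i r hr)
      have hK2 : (A j i r - δ)⁻¹ ≤ K := hK ⟨⟨j, i⟩, r⟩
      calc (1:ℝ) = (A j i r - δ)⁻¹ * (A j i r - δ) :=
            (inv_mul_cancel₀ (ne_of_gt hp)).symm
        _ ≤ K * (A j i r - δ) := mul_le_mul_of_nonneg_right hK2 (le_of_lt hp)
    have keyA : ∀ (j : Fin Q) (i : Fin (N j)) (r : Fin Q), r ≠ j → δ < A j i r := key
    set c : Fin Q → ℝ := fun r => ∑ k, f r k * classMean x r k with hc
    set W : ∀ ℓ : ℕ, Matrix (Fin (d (ℓ + 1))) (Fin (d ℓ)) ℝ := fun ℓ t s =>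
      if ℓ = 0 then
        (if h' : (t : ℕ) < Q then
          (if h : (s : ℕ) < M then f ⟨t, h'⟩ ⟨s, h⟩ else 0) else 0)
      else if ℓ = 1 then
        (if (t : ℕ) = (s : ℕ) ∧ (s : ℕ) < Q then -K else 0)
      else if ℓ = Q then
        (if h : (s : ℕ) < Q then
          (if h' : (t : ℕ) < Q then y ⟨s, h⟩ ⟨t, h'⟩ else 0) else 0)
      else
        (if (t : ℕ) = (s : ℕ) ∧ (s : ℕ) < Q then 1 else 0) with hW
    set b : ∀ ℓ : ℕ, Fin (d (ℓ + 1)) → ℝ := fun ℓ t =>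
      if ℓ = 0 then (if h' : (t : ℕ) < Q then -(c ⟨t, h'⟩) - δ else 0)
      else if ℓ = 1 then (if (t : ℕ) < Q then 1 else 0)
      else 0 with hb
    -- entry lemmas
    have hW0e : ∀ (t : Fin (d 1)) (s : Fin (d 0)),
        W 0 t s = if h' : (t : ℕ) < Q then f ⟨t, h'⟩ ⟨s, hd0 ▸ s.isLt⟩ else 0 := by
      intro t s
      rw [hW]
      norm_num
      by_cases h' : (t : ℕ) < Q
      · rw [dif_pos h', dif_pos h', dif_pos (hd0 ▸ s.isLt)]
      · rw [dif_neg h', dif_neg h']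
    have hb0e : ∀ t : Fin (d 1),
        b 0 t = if h' : (t : ℕ) < Q then -(c ⟨t, h'⟩) - δ else 0 := by
      intro t
      rw [hb]
      norm_num
    have hW1e : ∀ (t : Fin (d 2)) (s : Fin (d 1)),
        W 1 t s = if (t : ℕ) = (s : ℕ) ∧ (s : ℕ) < Q then -K else 0 := by
      intro t s
      rw [hW]
      norm_num
    have hb1e : ∀ t : Fin (d 2), b 1 t = if (t : ℕ) < Q then 1 else 0 := by
      intro t
      rw [hb]
      norm_num
    have hWme : ∀ ℓ : ℕ, ℓ ≠ 0 → ℓ ≠ 1 → ℓ ≠ Q →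
        ∀ (t : Fin (d (ℓ+1))) (s : Fin (d ℓ)),
        W ℓ t s = if (t : ℕ) = (s : ℕ) ∧ (s : ℕ) < Q then 1 else 0 := by
      intro ℓ h0 h1 hq t s
      rw [hW]
      simp only [if_neg h0, if_neg h1, if_neg hq]
    have hbme : ∀ ℓ : ℕ, ℓ ≠ 0 → ℓ ≠ 1 → ∀ t : Fin (d (ℓ+1)), b ℓ t = 0 := by
      intro ℓ h0 h1 t
      rw [hb]
      simp only [if_neg h0, if_neg h1]
    have hWQe : ∀ (t : Fin (d (Q+1))) (s : Fin (d Q)),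
        W Q t s = if h : (s : ℕ) < Q then
          (if h' : (t : ℕ) < Q then y ⟨s, h⟩ ⟨t, h'⟩ else 0) else 0 := by
      intro t s
      rw [hW]
      simp only [if_neg (show ¬ Q = 0 by omega), if_neg (show ¬ Q = 1 by omega),
        eq_self_iff_true, if_true]
    refine ⟨W, b, ?_⟩
    intro j i
    set z : Fin (d 0) → ℝ := fun k => x j i (Fin.cast hd0 k) with hz
    have hd1Q : Q ≤ d 1 := hQle 1 (by omega)
    have hd2Q : Q ≤ d 2 := hQle 2 (by omega)
    -- step 1
    have step1 : netHidden d W b 1 z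
        = fun s : Fin (d 1) =>
            if h : (s : ℕ) < Q then max (A j i ⟨s, h⟩ - δ) 0 else 0 := by
      funext t
      have e : netHidden d W b 1 z = relu ((W 0).mulVec z + b 0) := rfl
      rw [e]
      show max (((W 0).mulVec z + b 0) t) 0 = _
      rw [Pi.add_apply]
      by_cases h' : (t : ℕ) < Q
      · rw [dif_pos h']
        have hsum : (W 0).mulVec z t = ∑ k : Fin M, f ⟨t, h'⟩ k * x j i k := by
          show ∑ s : Fin (d 0), W 0 t s * z s = _
          apply Fintype.sum_equiv (finCongr hd0)
          intro s
          rw [hW0e t s, dif_pos h']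
          rfl
        rw [hsum, hb0e, dif_pos h']
        have hA2 : A j i ⟨t, h'⟩ = (∑ k, f ⟨t, h'⟩ k * x j i k) - c ⟨t, h'⟩ := by
          show ∑ k, f ⟨t, h'⟩ k * (x j i k - classMean x ⟨t, h'⟩ k)
              = (∑ k, f ⟨t, h'⟩ k * x j i k) - ∑ k, f ⟨t, h'⟩ k * classMean x ⟨t, h'⟩ k
          rw [← Finset.sum_sub_distrib]
          apply Finset.sum_congr rfl
          intro k _
          ring
        rw [hA2]
        congr 1
        ring
      · rw [dif_neg h']
        have hsum : (W 0).mulVec z t = 0 := by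
          show ∑ s : Fin (d 0), W 0 t s * z s = 0
          apply Finset.sum_eq_zero
          intro s _
          rw [hW0e t s, dif_neg h', zero_mul]
        rw [hsum, hb0e, dif_neg h', add_zero]
        simp
    -- step 2
    have step2 : netHidden d W b 2 z
        = fun t : Fin (d 2) => if (t : ℕ) = (j : ℕ) then 1 else 0 := by
      funext t
      have e : netHidden d W b 2 z = relu ((W 1).mulVec (netHidden d W b 1 z) + b 1) := rfl
      rw [e]
      show max (((W 1).mulVec (netHidden d W b 1 z) + b 1) t) 0 = _
      rw [Pi.add_apply, step1]
      set v : Fin (d 1) → ℝ :=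
        fun s => if h : (s : ℕ) < Q then max (A j i ⟨s, h⟩ - δ) 0 else 0 with hv
      have hsum : (W 1).mulVec v t
          = if h' : (t : ℕ) < Q then -K * v ⟨t, lt_of_lt_of_le h' hd1Q⟩ else 0 := by
        show ∑ s : Fin (d 1), W 1 t s * v s = _
        rw [Finset.sum_congr rfl (fun s _ => by rw [hW1e t s])]
        exact mulVec_select (-K) v t hd1Q
      rw [hsum, hb1e]
      by_cases h' : (t : ℕ) < Q
      · rw [dif_pos h', if_pos h']
        have hvt : v ⟨t, lt_of_lt_of_le h' hd1Q⟩ = max (A j i ⟨t, h'⟩ - δ) 0 := by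
          show (if h : ((⟨(t : ℕ), lt_of_lt_of_le h' hd1Q⟩ : Fin (d 1)) : ℕ) < Q
              then max (A j i ⟨(⟨(t : ℕ), lt_of_lt_of_le h' hd1Q⟩ : Fin (d 1)), h⟩ - δ) 0 else 0)
            = max (A j i ⟨t, h'⟩ - δ) 0
          rw [dif_pos h']
        rw [hvt]
        by_cases hj : (t : ℕ) = (j : ℕ)
        · have hrj : (⟨(t : ℕ), h'⟩ : Fin Q) = j := Fin.ext hj
          rw [hrj, if_pos hj]
          have hm : max (A j i j - δ) 0 = 0 :=
            max_eq_right (by linarith [hAj j i])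
          rw [hm, mul_zero, zero_add]
          exact max_eq_left zero_le_one
        · have hr : (⟨(t : ℕ), h'⟩ : Fin Q) ≠ j := fun he => hj (congrArg Fin.val he)
          rw [if_neg hj]
          have hkl := keyA j i ⟨(t : ℕ), h'⟩ hr
          have hm : max (A j i ⟨(t : ℕ), h'⟩ - δ) 0 = A j i ⟨(t : ℕ), h'⟩ - δ :=
            max_eq_left (by linarith)
          rw [hm]
          apply max_eq_right
          have := hKP j i ⟨(t : ℕ), h'⟩ hr
          nlinarith
      · rw [dif_neg h', if_neg h', add_zero]
        have : ¬ (t : ℕ) = (j : ℕ) := by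
          intro he
          exact h' (he ▸ j.isLt)
        rw [if_neg this]
        simp
    -- step 3 : identity layers
    have step3 : ∀ n : ℕ, n + 2 ≤ Q → netHidden d W b (n + 2) z
        = fun t : Fin (d (n + 2)) => if (t : ℕ) = (j : ℕ) then 1 else 0 := by
      intro n
      induction n with
      | zero => intro _; exact step2
      | succ m ih =>
        intro hle
        have hm := ih (by omega)
        have e : netHidden d W b (m + 1 + 2) z
            = relu ((W (m + 2)).mulVec (netHidden d W b (m + 2) z) + b (m + 2)) := rfl
        rw [e, hm]
        funext t
        show max (((W (m + 2)).mulVec _ + b (m + 2)) t) 0 = _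
        rw [Pi.add_apply, hbme (m + 2) (by omega) (by omega), add_zero]
        set v : Fin (d (m + 2)) → ℝ :=
          fun s => if (s : ℕ) = (j : ℕ) then 1 else 0 with hv
        have hdmQ : Q ≤ d (m + 2) := hQle (m + 2) (by omega)
        have hsum : (W (m + 2)).mulVec v t
            = if h' : (t : ℕ) < Q then 1 * v ⟨t, lt_of_lt_of_le h' hdmQ⟩ else 0 := by
          show ∑ s : Fin (d (m + 2)), W (m + 2) t s * v s = _
          rw [Finset.sum_congr rfl
            (fun s _ => by rw [hWme (m + 2) (by omega) (by omega) (by omega) t s])]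
          exact mulVec_select 1 v t hdmQ
        rw [hsum]
        by_cases h' : (t : ℕ) < Q
        · rw [dif_pos h']
          have hvt : v ⟨t, lt_of_lt_of_le h' hdmQ⟩
              = if (t : ℕ) = (j : ℕ) then 1 else 0 := rfl
          rw [hvt, one_mul]
          by_cases hj : (t : ℕ) = (j : ℕ) <;> simp [hj]
        · rw [dif_neg h']
          have : ¬ (t : ℕ) = (j : ℕ) := by
            intro he
            exact h' (he ▸ j.isLt)
          rw [if_neg this]
          simp
    have hQQ : netHidden d W b Q z
        = fun t : Fin (d Q) => if (t : ℕ) = (j : ℕ) then 1 else 0 := by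
      have h := step3 (Q - 2) (by omega)
      have e : Q - 2 + 2 = Q := by omega
      rw [e] at h
      exact h
    funext r
    show ((W Q).mulVec (netHidden d W b Q z) + b Q) r = _
    rw [Pi.add_apply, hQQ, hbme Q (by omega) (by omega), add_zero]
    have hjd : (j : ℕ) < d Q := lt_of_lt_of_le j.isLt (hQle Q (by omega))
    have hsum : (W Q).mulVec (fun t : Fin (d Q) => if (t : ℕ) = (j : ℕ) then 1 else 0) r
        = W Q r ⟨(j : ℕ), hjd⟩ := by
      show ∑ s : Fin (d Q), W Q r s * (if (s : ℕ) = (j : ℕ) then 1 else 0) = _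
      exact sum_mul_indicator hjd (fun s => W Q r s)
    rw [hsum, hWQe, dif_pos j.isLt, dif_pos (show (r : ℕ) < Q by
      have := r.isLt; omega)]
    rfl
end

section
/- Let d_0 ≥ d_1 ≥ ⋯ ≥ d_L and let W_ℓ ∈ ℝ^{d_ℓ×d_{ℓ−1}}, b_ℓ ∈ ℝ^{d_ℓ} (ℓ = 1,…,L) be such that each W_ℓ and each cumulative matrix W^{(ℓ)} := W_ℓ W_{ℓ−1} ⋯ W_1 is surjective. Define the cumulative biases b^{(1)} := b_1 and b^{(ℓ)} := W_ℓ ⋯ W_2 b_1 + W_ℓ ⋯ W_3 b_2 + ⋯ + W_ℓ b_{ℓ−1} + b_ℓ for ℓ ≥ 2. Then for every input x ∈ ℝ^{d_0}, the layer outputs x^{(ℓ)} of the ReLU network satisfy: (a) x^{(ℓ)} = W_ℓ · τ_{W_ℓ,b_ℓ}(x^{(ℓ−1)}) + b_ℓ for ℓ = 1,…,L−1; (b) x^{(ℓ)} = W^{(ℓ)} x^{(τ,ℓ)} + b^{(ℓ)} for ℓ = 1,…,L−1, where x^{(τ,ℓ)} := τ_{W^{(ℓ)},b^{(ℓ)}}(τ_{W^{(ℓ−1)},b^{(ℓ−1)}}(⋯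 τ_{W^{(1)},b^{(1)}}(x) ⋯)); and (c) x^{(L)} = W^{(L)} x^{(τ,L−1)} + b^{(L)}. -/
open Matrix

/-- Moore–Penrose generalized inverse of a surjective matrix: `W⁺ = Wᵀ (W Wᵀ)⁻¹`. -/
noncomputable def pinv {m n : ℕ} (W : Matrix (Fin m) (Fin n) ℝ) :
    Matrix (Fin n) (Fin m) ℝ :=
  Wᵀ * (W * Wᵀ)⁻¹

/-- The truncation map `τ_{W,b}(x) := W⁺ (σ(Wx + b) − b)`. -/
noncomputable def tau {m n : ℕ} (W : Matrix (Fin m) (Fin n) ℝ) (b : Fin m → ℝ)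
    (x : Fin n → ℝ) : Fin n → ℝ :=
  (pinv W).mulVec (relu (W.mulVec x + b) - b)

/-- Cumulative weight matrices: `cumW ℓ = W^{(ℓ+1)} = W_{ℓ+1} ⋯ W_1` (0-indexed). -/
noncomputable def cumW (d : ℕ → ℕ)
    (W : ∀ ℓ : ℕ, Matrix (Fin (d (ℓ + 1))) (Fin (d ℓ)) ℝ) :
    (ℓ : ℕ) → Matrix (Fin (d (ℓ + 1))) (Fin (d 0)) ℝ
  | 0 => W 0
  | ℓ + 1 => W (ℓ + 1) * cumW d W ℓ

/-- Cumulative biases: `cumB ℓ = b^{(ℓ+1)}`, with `b^{(ℓ)} = W_ℓ b^{(ℓ−1)} + b_ℓ`. -/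
noncomputable def cumB (d : ℕ → ℕ)
    (W : ∀ ℓ : ℕ, Matrix (Fin (d (ℓ + 1))) (Fin (d ℓ)) ℝ)
    (b : ∀ ℓ : ℕ, Fin (d (ℓ + 1)) → ℝ) :
    (ℓ : ℕ) → Fin (d (ℓ + 1)) → ℝ
  | 0 => b 0
  | ℓ + 1 => (W (ℓ + 1)).mulVec (cumB d W b ℓ) + b (ℓ + 1)

/-- Iterated truncations by cumulative parameters:
`xtau ℓ x = x^{(τ, ℓ+1)} = τ_{W^{(ℓ+1)},b^{(ℓ+1)}}(⋯ τ_{W^{(1)},b^{(1)}}(x) ⋯)`. -/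
noncomputable def xtau (d : ℕ → ℕ)
    (W : ∀ ℓ : ℕ, Matrix (Fin (d (ℓ + 1))) (Fin (d ℓ)) ℝ)
    (b : ∀ ℓ : ℕ, Fin (d (ℓ + 1)) → ℝ) :
    (ℓ : ℕ) → (Fin (d 0) → ℝ) → (Fin (d 0) → ℝ)
  | 0, x => tau (cumW d W 0) (cumB d W b 0) x
  | ℓ + 1, x => tau (cumW d W (ℓ + 1)) (cumB d W b (ℓ + 1)) (xtau d W b ℓ x)


section Aux

open Matrix

lemma mul_pinv_eq_one {m n : ℕ} (W : Matrix (Fin m) (Fin n) ℝ)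
    (hW : Function.Surjective W.mulVec) : W * pinv W = 1 := by
  have hT : Function.Injective Wᵀ.mulVec := by
    intro x y hxy
    have h0 : Wᵀ *ᵥ (x - y) = 0 := by
      rw [Matrix.mulVec_sub, hxy, sub_self]
    have : x - y = 0 := by
      funext i
      obtain ⟨u, hu⟩ := hW (Pi.single i 1)
      have : (W *ᵥ u) ⬝ᵥ (x - y) = u ⬝ᵥ (Wᵀ *ᵥ (x - y)) := by
        rw [Matrix.dotProduct_mulVec, Matrix.vecMul_transpose]
      rw [hu, h0, dotProduct_zero, single_dotProduct, one_mul] at this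
      simpa using this
    have := sub_eq_zero.mp this
    exact this
  have hinj : Function.Injective (W * Wᵀ).mulVec := by
    intro x y hxy
    have h0 : (W * Wᵀ) *ᵥ (x - y) = 0 := by
      rw [Matrix.mulVec_sub, hxy, sub_self]
    have h1 : (Wᵀ *ᵥ (x - y)) ⬝ᵥ (Wᵀ *ᵥ (x - y)) = 0 := by
      have : (Wᵀ *ᵥ (x - y)) ⬝ᵥ (Wᵀ *ᵥ (x - y)) = (x - y) ⬝ᵥ ((W * Wᵀ) *ᵥ (x - y)) := by
        rw [← Matrix.mulVec_mulVec, Matrix.dotProduct_mulVec (x - y) W,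
          ← Matrix.mulVec_transpose]
      rw [this, h0, dotProduct_zero]
    have h2 : Wᵀ *ᵥ (x - y) = 0 := dotProduct_self_eq_zero.mp h1
    rw [Matrix.mulVec_sub] at h2
    exact hT (sub_eq_zero.mp h2)
  have hU : IsUnit (W * Wᵀ) := Matrix.mulVec_injective_iff_isUnit.mp hinj
  have hdet : IsUnit (W * Wᵀ).det := (Matrix.isUnit_iff_isUnit_det _).mp hU
  calc W * pinv W = (W * Wᵀ) * (W * Wᵀ)⁻¹ := by rw [pinv, ← Matrix.mul_assoc]
    _ = 1 := Matrix.mul_nonsing_inv _ hdet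

lemma mulVec_tau_add {m n : ℕ} (W : Matrix (Fin m) (Fin n) ℝ) (b : Fin m → ℝ)
    (hW : Function.Surjective W.mulVec) (x : Fin n → ℝ) :
    W.mulVec (tau W b x) + b = relu (W.mulVec x + b) := by
  unfold tau
  rw [Matrix.mulVec_mulVec, mul_pinv_eq_one W hW, Matrix.one_mulVec]
  simp

end Aux

/-- the layer outputs of a ReLU network can be written via truncation maps and
cumulative parameters (weights `W ℓ` and biases `b ℓ` are 0-indexed, so `W ℓ` is the
`(ℓ+1)`-st layer's weight matrix). -/
theorem net_layers_eq_truncations (L : ℕ) (hL : 2 ≤ L) (d : ℕ → ℕ)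
    (hd : ∀ ℓ : ℕ, ℓ < L → d (ℓ + 1) ≤ d ℓ)
    (W : ∀ ℓ : ℕ, Matrix (Fin (d (ℓ + 1))) (Fin (d ℓ)) ℝ)
    (b : ∀ ℓ : ℕ, Fin (d (ℓ + 1)) → ℝ)
    (hWsurj : ∀ ℓ : ℕ, ℓ < L → Function.Surjective (W ℓ).mulVec)
    (hcumsurj : ∀ ℓ : ℕ, ℓ < L → Function.Surjective (cumW d W ℓ).mulVec) :
    -- (a) x^{(ℓ)} = W_ℓ τ_{W_ℓ,b_ℓ}(x^{(ℓ−1)}) + b_ℓ for the hidden layers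
    (∀ ℓ : ℕ, ℓ + 1 < L → ∀ x : Fin (d 0) → ℝ,
      netHidden d W b (ℓ + 1) x
        = (W ℓ).mulVec (tau (W ℓ) (b ℓ) (netHidden d W b ℓ x)) + b ℓ) ∧
    -- (b) x^{(ℓ)} = W^{(ℓ)} x^{(τ,ℓ)} + b^{(ℓ)} for the hidden layers
    (∀ ℓ : ℕ, ℓ + 1 < L → ∀ x : Fin (d 0) → ℝ,
      netHidden d W b (ℓ + 1) x
        = (cumW d W ℓ).mulVec (xtau d W b ℓ x) + cumB d W b ℓ) ∧
    -- (c) the network output x^{(L)} = W^{(L)} x^{(τ,L−1)} + b^{(L)}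
    (∀ x : Fin (d 0) → ℝ,
      (W (L - 1)).mulVec (netHidden d W b (L - 1) x) + b (L - 1)
        = (cumW d W (L - 1)).mulVec (xtau d W b (L - 2) x) + cumB d W b (L - 1)) := by
  have key : ∀ ℓ : ℕ, ℓ < L → ∀ x : Fin (d 0) → ℝ,
      netHidden d W b (ℓ + 1) x
        = (cumW d W ℓ).mulVec (xtau d W b ℓ x) + cumB d W b ℓ := by
    intro ℓ
    induction ℓ with
    | zero =>
      intro _ x
      show relu ((W 0).mulVec x + b 0) = _
      rw [xtau, cumW, cumB, mulVec_tau_add _ _ (hWsurj 0 (by omega))]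
    | succ k ih =>
      intro hk x
      show relu ((W (k+1)).mulVec (netHidden d W b (k+1) x) + b (k+1)) = _
      rw [ih (by omega) x, Matrix.mulVec_add, Matrix.mulVec_mulVec]
      simp only [add_assoc]
      exact (mulVec_tau_add (cumW d W (k+1)) (cumB d W b (k+1)) (hcumsurj (k+1) hk)
        (xtau d W b k x)).symm
  refine ⟨?_, ?_, ?_⟩
  · intro ℓ hℓ x
    show relu ((W ℓ).mulVec (netHidden d W b ℓ x) + b ℓ) = _
    rw [mulVec_tau_add _ _ (hWsurj ℓ (by omega))]
  · intro ℓ hℓ x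
    exact key ℓ (by omega) x
  · intro x
    obtain ⟨k, rfl⟩ : ∃ k, L = k + 2 := ⟨L - 2, by omega⟩
    have h1 : k + 2 - 1 = k + 1 := rfl
    have h2 : k + 2 - 2 = k := rfl
    rw [h1, h2, show netHidden d W b (k+1) x = _ from key k (by omega) x,
      Matrix.mulVec_add, Matrix.mulVec_mulVec]
    simp only [add_assoc]
    rfl
end

section
/- Let n ≥ m ≥ 1, p ∈ ℝ^n, h ∈ ℝ^n a unit vector, and θ ∈ (0,π). Let R, R̃ ∈ SO(n) satisfy Rh = u_n/√n and R̃e_1 = u_n/√n, set λ := tan(θ_n/2)/tan(θ/2) if θ > θ_n and λ := 1 otherwise, W_θ := R̃ · diag(1, λ, …, λ) · R̃ᵀ, W := P^{n→m} W_θ R ∈ ℝ^{m×n}, and b := −Wp ∈ ℝ^m. Then W is surjective and for every x ∈ p + C_θ[h], the truncation map satisfies τ_{W,b}(x) = (W⁺W) x. -/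
open Matrix

/-- `θ_n := 2 arccos √((n−1)/n)`, the angle of the largest cone around the diagonal
contained in the positive sector. -/
noncomputable def thetaN (n : ℕ) : ℝ := 2 * Real.arccos (Real.sqrt (((n : ℝ) - 1) / n))

/-- The shrinking factor `λ(θ, θ_n)`. -/
noncomputable def lam (θ : ℝ) (n : ℕ) : ℝ :=
  if thetaN n < θ then Real.tan (thetaN n / 2) / Real.tan (θ / 2) else 1

/-- `W_θ := R̃ diag(1, λ, …, λ) R̃ᵀ`. -/
noncomputable def Wtheta {n : ℕ} (Rt : Matrix (Fin n) (Fin n) ℝ) (θ : ℝ) :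
    Matrix (Fin n) (Fin n) ℝ :=
  Rt * Matrix.diagonal (fun i : Fin n => if (i : ℕ) = 0 then (1 : ℝ) else lam θ n) * Rtᵀ

/-- The coordinate projection `P^{n→m}`, sending `e_i^n` to `e_i^m` for `i ≤ m`, else to `0`. -/
def coordProj (m n : ℕ) : Matrix (Fin m) (Fin n) ℝ :=
  Matrix.of fun i j => if (i : ℕ) = (j : ℕ) then 1 else 0

lemma key_scalar {n : ℕ} (hn : 1 ≤ n) {θ : ℝ} (hθ0 : 0 < θ) (hθπ : θ < Real.pi) :
    0 < lam θ n ∧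
      lam θ n * (Real.sqrt ((n : ℝ) - 1) * Real.sin (θ / 2)) ≤ Real.cos (θ / 2) := by
  have hn0 : (0:ℝ) < n := by exact_mod_cast hn
  set t : ℝ := Real.sqrt (((n : ℝ) - 1) / n) with ht
  have hn1 : (1:ℝ) ≤ n := by exact_mod_cast hn
  have htfrac0 : (0:ℝ) ≤ ((n : ℝ) - 1) / n := by
    apply div_nonneg _ hn0.le; linarith
  have htfrac1 : ((n : ℝ) - 1) / n ≤ 1 := by
    rw [div_le_one hn0]; linarith
  have ht0 : 0 ≤ t := Real.sqrt_nonneg _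
  have ht1 : t ≤ 1 := by
    calc t ≤ Real.sqrt 1 := Real.sqrt_le_sqrt htfrac1
      _ = 1 := Real.sqrt_one
  have htsq : t ^ 2 = ((n : ℝ) - 1) / n := Real.sq_sqrt htfrac0
  have hhalf : thetaN n / 2 = Real.arccos t := by
    rw [thetaN]; ring
  have hcosT : Real.cos (thetaN n / 2) = t := by
    rw [hhalf, Real.cos_arccos (by linarith) ht1]
  have hsinT : Real.sin (thetaN n / 2) = Real.sqrt (1 / n) := by
    rw [hhalf, Real.sin_arccos, htsq]
    congr 1
    field_simp
    ring
  have hc0 : 0 < Real.cos (θ / 2) := by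
    apply Real.cos_pos_of_mem_Ioo
    constructor <;> [linarith [Real.pi_pos]; linarith]
  have hs0 : 0 < Real.sin (θ / 2) := by
    apply Real.sin_pos_of_pos_of_lt_pi (by linarith)
    linarith [Real.pi_pos]
  set s := Real.sin (θ/2)
  set c := Real.cos (θ/2)
  rw [lam]
  split_ifs with hcase
  · -- thetaN n < θ, so n ≥ 2
    have hn2 : 2 ≤ n := by
      by_contra hlt
      interval_cases n
      have hpi : thetaN 1 = Real.pi := by
        simp [thetaN, Real.arccos_zero]
        ring
      rw [hpi] at hcase; linarith
    have hn2' : (2:ℝ) ≤ n := by exact_mod_cast hn2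
    have htpos : 0 < t := by
      rw [ht]
      apply Real.sqrt_pos.2
      apply div_pos _ hn0
      linarith
    have hinv0 : (0:ℝ) < Real.sqrt (1 / n) := Real.sqrt_pos.2 (by positivity)
    have htanT : Real.tan (thetaN n / 2) = Real.sqrt (1 / n) / t := by
      rw [Real.tan_eq_sin_div_cos, hsinT, hcosT]
    have htanθ : Real.tan (θ / 2) = s / c := Real.tan_eq_sin_div_cos _
    have htanθ0 : 0 < Real.tan (θ / 2) := by rw [htanθ]; positivity
    constructor
    · apply div_pos _ htanθ0
      rw [htanT]; positivity
    · rw [htanT, htanθ]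
      have hkey : Real.sqrt (1 / n) * Real.sqrt ((n : ℝ) - 1) = t := by
        rw [ht, ← Real.sqrt_mul (by positivity)]
        congr 1
        field_simp
      have heq : Real.sqrt (1/(n:ℝ)) / t / (s / c) * (Real.sqrt ((n:ℝ) - 1) * s) = c := by
        calc Real.sqrt (1/(n:ℝ)) / t / (s / c) * (Real.sqrt ((n:ℝ) - 1) * s)
            = (Real.sqrt (1/(n:ℝ)) * Real.sqrt ((n:ℝ) - 1)) * (c / t) * (s / s) := by
              rw [div_div_eq_mul_div]
              ring
          _ = t * (c / t) * 1 := by rw [hkey, div_self hs0.ne']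
          _ = c := by
              rw [mul_one, mul_comm, div_mul_cancel₀ c htpos.ne']
      rw [heq]
  · -- θ ≤ thetaN n
    push_neg at hcase
    refine ⟨one_pos, ?_⟩
    rw [one_mul]
    rcases eq_or_lt_of_le hn1 with h1 | h2
    · rw [← h1]; norm_num; linarith
    · have hcge : t ≤ c := by
        have := Real.cos_le_cos_of_nonneg_of_le_pi (by linarith : (0:ℝ) ≤ θ/2)
          (by rw [hhalf]; exact Real.arccos_le_pi t) (by linarith : θ/2 ≤ thetaN n / 2)
        rwa [hcosT] at this
      have hpyth : s ^ 2 + c ^ 2 = 1 := Real.sin_sq_add_cos_sq _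
      have hssq : s ^ 2 ≤ 1 / n := by
        have hc2 : t ^ 2 ≤ c ^ 2 := by nlinarith
        rw [htsq] at hc2
        have : ((n:ℝ) - 1)/n = 1 - 1/n := by field_simp
        nlinarith [this]
      have hsq : (Real.sqrt ((n:ℝ) - 1) * s) ^ 2 ≤ c ^ 2 := by
        rw [mul_pow, Real.sq_sqrt (by linarith : (0:ℝ) ≤ (n:ℝ) - 1)]
        have : ((n:ℝ) - 1) * s ^ 2 ≤ ((n:ℝ) - 1) * (1/n) := by
          apply mul_le_mul_of_nonneg_left hssq (by linarith)
        calc ((n:ℝ) - 1) * s ^ 2 ≤ ((n:ℝ) - 1) * (1/n) := this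
          _ = ((n:ℝ) - 1)/n := by ring
          _ = t ^ 2 := htsq.symm
          _ ≤ c ^ 2 := by nlinarith
      have h1 : Real.sqrt ((Real.sqrt ((n:ℝ) - 1) * s) ^ 2) ≤ Real.sqrt (c ^ 2) :=
        Real.sqrt_le_sqrt hsq
      rwa [Real.sqrt_sq (mul_nonneg (Real.sqrt_nonneg _) hs0.le), Real.sqrt_sq hc0.le] at h1

lemma wtr_formula {n : ℕ} (hn : 0 < n) {θ : ℝ}
    (R Rt : Matrix (Fin n) (Fin n) ℝ)
    (hRtR : Rt * Rtᵀ = 1)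
    (hRte : Rt.mulVec (fun i : Fin n => if (i : ℕ) = 0 then (1 : ℝ) else 0)
      = fun _ => (Real.sqrt n)⁻¹)
    (z : Fin n → ℝ) :
    (Wtheta Rt θ * R).mulVec z = fun i =>
      lam θ n * (R.mulVec z) i
        + (1 - lam θ n) * ((Real.sqrt n)⁻¹ * ∑ k, (R.mulVec z) k) * (Real.sqrt n)⁻¹ := by
  set y := R.mulVec z with hy
  have hWy : (Wtheta Rt θ * R).mulVec z = (Wtheta Rt θ).mulVec y := by
    rw [← Matrix.mulVec_mulVec]
  rw [hWy, Wtheta, ← Matrix.mulVec_mulVec, ← Matrix.mulVec_mulVec]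
  set v := Rtᵀ.mulVec y with hv
  set i0 : Fin n := ⟨0, hn⟩ with hi0
  have hcol : ∀ j, Rt j i0 = (Real.sqrt n)⁻¹ := by
    intro j
    have h1 := congrFun hRte j
    simp only [Matrix.mulVec, dotProduct] at h1
    have hite : ∀ k : Fin n, Rt j k * (if (k:ℕ) = 0 then (1:ℝ) else 0)
        = if k = i0 then Rt j k else 0 := by
      intro k
      by_cases hk : k = i0
      · subst hk; simp [hi0]
      · have : ¬ ((k:ℕ) = 0) := fun hc => hk (Fin.ext hc)
        simp [this, hk]
    rw [Finset.sum_congr rfl (fun k _ => hite k), Finset.sum_ite_eq' Finset.univ i0] at h1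
    simpa using h1
  have hv0 : v i0 = (Real.sqrt n)⁻¹ * ∑ k, y k := by
    show (Rtᵀ *ᵥ y) i0 = _
    simp only [Matrix.mulVec, dotProduct, Matrix.transpose_apply]
    rw [Finset.mul_sum]
    exact Finset.sum_congr rfl fun k _ => by rw [hcol k]
  set a := (Real.sqrt n)⁻¹ * ∑ k, y k with ha
  have hDv : (Matrix.diagonal (fun i : Fin n => if (i : ℕ) = 0 then (1 : ℝ) else lam θ n)) *ᵥ v
      = (lam θ n) • v + ((1 - lam θ n) * a) • (fun i : Fin n => if (i:ℕ) = 0 then (1:ℝ) else 0) := by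
    funext i
    simp only [Matrix.mulVec_diagonal, Pi.add_apply, Pi.smul_apply, smul_eq_mul]
    by_cases hi : (i:ℕ) = 0
    · have hii : i = i0 := Fin.ext hi
      rw [if_pos hi, if_pos hi, hii, hv0]
      ring
    · rw [if_neg hi, if_neg hi]
      ring
  rw [hDv, Matrix.mulVec_add, Matrix.mulVec_smul, Matrix.mulVec_smul]
  have hRtv : Rt *ᵥ v = y := by
    rw [hv, Matrix.mulVec_mulVec, hRtR, Matrix.one_mulVec]
  rw [hRtv, hRte]
  funext i
  simp only [Pi.add_apply, Pi.smul_apply, smul_eq_mul]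

lemma dot_preserved {n : ℕ} (R : Matrix (Fin n) (Fin n) ℝ) (hRorth : Rᵀ * R = 1)
    (u w : Fin n → ℝ) :
    ∑ i, (R.mulVec u) i * (R.mulVec w) i = ∑ i, u i * w i := by
  have : (R.mulVec u) ⬝ᵥ (R.mulVec w) = u ⬝ᵥ w := by
    rw [Matrix.dotProduct_mulVec, ← Matrix.mulVec_transpose, Matrix.mulVec_mulVec, hRorth,
      Matrix.one_mulVec]
  simpa [dotProduct] using this

set_option maxHeartbeats 1000000 in
lemma wtr_nonneg {n : ℕ} (hn : 1 ≤ n) (h : Fin n → ℝ) (hh : vnorm h = 1)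
    {θ : ℝ} (hθ0 : 0 < θ) (hθπ : θ < Real.pi)
    (R Rt : Matrix (Fin n) (Fin n) ℝ)
    (hRorth : Rᵀ * R = 1) (hRtR : Rt * Rtᵀ = 1)
    (hRh : R.mulVec h = fun _ => (Real.sqrt n)⁻¹)
    (hRte : Rt.mulVec (fun i : Fin n => if (i : ℕ) = 0 then (1 : ℝ) else 0)
      = fun _ => (Real.sqrt n)⁻¹)
    (z : Fin n → ℝ) (hz : inCone θ h z) (j : Fin n) :
    0 ≤ (Wtheta Rt θ * R).mulVec z j := by
  rcases hz with hz0 | hangle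
  · subst hz0
    rw [Matrix.mulVec_zero]
    exact le_refl 0
  have hn0 : (0:ℝ) < n := by exact_mod_cast hn
  have hn1 : (1:ℝ) ≤ n := by exact_mod_cast hn
  set sqn := Real.sqrt n with hsqn
  have hsqn0 : 0 < sqn := Real.sqrt_pos.2 hn0
  have hsqnsq : sqn * sqn = n := Real.mul_self_sqrt hn0.le
  set y := R.mulVec z with hy
  set a := sqn⁻¹ * ∑ k, y k with ha
  have hform := congrFun (wtr_formula (θ := θ) (by omega) R Rt hRtR hRte z) j
  rw [hform]
  show 0 ≤ lam θ n * y j + (1 - lam θ n) * a * sqn⁻¹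
  by_cases hzz : z = 0
  · subst hzz
    have hy0 : y = 0 := by rw [hy, Matrix.mulVec_zero]
    rw [hy0]
    simp [ha, hy0]
  have hdot : ∑ i, z i * h i = a := by
    rw [ha, Finset.mul_sum]
    rw [← dot_preserved R hRorth z h]
    apply Finset.sum_congr rfl
    intro i _
    rw [← hy, hRh]
    ring
  have hnormsq : ∑ i, y i * y i = ∑ i, z i * z i := dot_preserved R hRorth z z
  set Nz := vnorm z with hNz
  have hsumz0 : 0 < ∑ i, z i * z i := by
    obtain ⟨i, hi⟩ := Function.ne_iff.1 hzz
    apply Finset.sum_pos' (fun i _ => mul_self_nonneg _)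
    exact ⟨i, Finset.mem_univ i, mul_self_pos.2 hi⟩
  have hNzpos : 0 < Nz := Real.sqrt_pos.2 hsumz0
  have hNzsq : Nz ^ 2 = ∑ i, z i * z i := Real.sq_sqrt hsumz0.le
  have hsq_eq : ∀ x : Fin n → ℝ, ∑ i, x i ^ 2 = ∑ i, x i * x i := by
    intro x; simp [sq]
  have hsumh : ∑ i, h i * h i = 1 := by
    have h2 := hh
    rw [vnorm, Real.sqrt_eq_one] at h2
    exact h2
  have hvnz : Real.sqrt (∑ i, z i ^ 2) = Nz := by rw [hsq_eq z]; rfl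
  have hvnh : Real.sqrt (∑ i, h i ^ 2) = 1 := by rw [hsq_eq h, hsumh, Real.sqrt_one]
  have hCS1 : a ≤ Nz := by
    rw [← hdot]
    calc ∑ i, z i * h i ≤ Real.sqrt (∑ i, z i ^ 2) * Real.sqrt (∑ i, h i ^ 2) :=
          Real.sum_mul_le_sqrt_mul_sqrt _ _ _
      _ = Nz * 1 := by rw [hvnz, hvnh]
      _ = Nz := mul_one _
  have hCS2 : -Nz ≤ a := by
    rw [← hdot]
    have hcs := Real.sum_mul_le_sqrt_mul_sqrt Finset.univ (fun i => -z i) h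
    have hL : ∑ i, (fun i => -z i) i * h i = -∑ i, z i * h i := by
      simp [Finset.sum_neg_distrib]
    have hR2 : ∑ i, (fun i => -z i) i ^ 2 = ∑ i, z i ^ 2 := by simp
    rw [hL, hR2, hvnz, hvnh, mul_one] at hcs
    linarith
  set c := Real.cos (θ/2) with hc
  set s := Real.sin (θ/2) with hs
  have hc0 : 0 < c := by
    apply Real.cos_pos_of_mem_Ioo
    constructor <;> [linarith [Real.pi_pos]; linarith]
  have hs0 : 0 < s := by
    apply Real.sin_pos_of_pos_of_lt_pi (by linarith)
    linarith [Real.pi_pos]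
  have harc : Real.arccos (a / Nz) ≤ θ / 2 := by
    have h3 := hangle
    rw [angle', hh, mul_one, hdot, ← hNz] at h3
    exact h3
  have hq : c ≤ a / Nz := by
    have hub : a / Nz ≤ 1 := (div_le_one hNzpos).2 hCS1
    have hlb : (-1:ℝ) ≤ a / Nz := by rw [le_div_iff₀ hNzpos]; linarith
    have hcc := Real.cos_le_cos_of_nonneg_of_le_pi (Real.arccos_nonneg _)
      (by linarith [Real.pi_pos] : θ/2 ≤ Real.pi) harc
    rwa [Real.cos_arccos hlb hub] at hcc
  have hNc : Nz * c ≤ a := by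
    rw [mul_comm]
    exact (le_div_iff₀ hNzpos).mp hq
  set w : Fin n → ℝ := fun i => y i - a * sqn⁻¹ with hw
  have hsumy : ∑ k, y k = a * sqn := by
    rw [ha]
    field_simp
  have hsumw : ∑ i, w i = 0 := by
    simp only [hw, Finset.sum_sub_distrib, Finset.sum_const, Finset.card_univ,
      Fintype.card_fin, nsmul_eq_mul, hsumy]
    field_simp
    linear_combination a * hsqnsq
  have hsumw2 : ∑ i, w i ^ 2 = (∑ i, y i * y i) - a ^ 2 := by
    have hterm : ∀ i : Fin n, w i ^ 2
        = (y i * y i) - (2 * (a * sqn⁻¹)) * y i + (a * sqn⁻¹) ^ 2 := by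
      intro i
      simp only [hw]
      ring
    rw [Finset.sum_congr rfl (fun i _ => hterm i), Finset.sum_add_distrib,
      Finset.sum_sub_distrib, ← Finset.mul_sum, Finset.sum_const, Finset.card_univ,
      Fintype.card_fin, nsmul_eq_mul, hsumy]
    have hinv : sqn⁻¹ * sqn = 1 := inv_mul_cancel₀ hsqn0.ne'
    have hninv : (n:ℝ) * (sqn⁻¹)^2 = 1 := by
      rw [← hsqnsq]
      field_simp
    linear_combination (-2*a^2) * hinv + a^2 * hninv
  have hpyth : s^2 + c^2 = 1 := Real.sin_sq_add_cos_sq _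
  have hw2N : ∑ i, w i ^2 ≤ (Nz * s)^2 := by
    rw [hsumw2, hnormsq, ← hNzsq]
    have haNc2 : (Nz*c)^2 ≤ a^2 := pow_le_pow_left₀ (mul_pos hNzpos hc0).le hNc 2
    have hcc : (Nz*c)^2 = Nz^2 - Nz^2*s^2 := by linear_combination Nz^2 * hpyth
    have hss : (Nz*s)^2 = Nz^2*s^2 := by ring
    linarith
  have hw2nonneg : 0 ≤ ∑ i, w i^2 := Finset.sum_nonneg fun i _ => sq_nonneg _
  set Q := Real.sqrt (∑ i, w i^2) with hQdef
  have hQle : Q ≤ Nz * s := by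
    rw [hQdef]
    calc Real.sqrt (∑ i, w i^2) ≤ Real.sqrt ((Nz*s)^2) := Real.sqrt_le_sqrt hw2N
      _ = Nz * s := Real.sqrt_sq (by positivity)
  have hgsum : ∑ i, ((if i = j then (1:ℝ) else 0) - (n:ℝ)⁻¹) ^ 2 = ((n:ℝ) - 1)/n := by
    have hterm : ∀ i : Fin n, ((if i = j then (1:ℝ) else 0) - (n:ℝ)⁻¹) ^ 2
        = (if i = j then (1 - 2*(n:ℝ)⁻¹) else 0) + ((n:ℝ)⁻¹)^2 := by
      intro i
      by_cases hij : i = j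
      · simp only [hij, if_true]
        ring
      · simp only [hij, if_false]
        ring
    rw [Finset.sum_congr rfl (fun i _ => hterm i), Finset.sum_add_distrib,
      Finset.sum_ite_eq' Finset.univ j, Finset.sum_const, Finset.card_univ,
      Fintype.card_fin, nsmul_eq_mul]
    simp only [Finset.mem_univ, if_true]
    field_simp
    ring
  have hwjlow : -(Q * Real.sqrt (((n:ℝ)-1)/n)) ≤ w j := by
    have hcs := Real.sum_mul_le_sqrt_mul_sqrt Finset.univ (fun i => -w i)
        (fun i => (if i = j then (1:ℝ) else 0) - (n:ℝ)⁻¹)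
    have hL : ∑ i, (fun i => -w i) i * ((fun i => (if i = j then (1:ℝ) else 0) - (n:ℝ)⁻¹) i)
        = -(w j) := by
      have hterm : ∀ i : Fin n, (-w i) * ((if i = j then (1:ℝ) else 0) - (n:ℝ)⁻¹)
          = (if i = j then -w i else 0) + (n:ℝ)⁻¹ * w i := by
        intro i
        by_cases hij : i = j
        · simp only [hij, if_true]
          ring
        · simp only [hij, if_false]
          ring
      simp only []
      rw [Finset.sum_congr rfl (fun i _ => hterm i), Finset.sum_add_distrib,
        Finset.sum_ite_eq' Finset.univ j, ← Finset.mul_sum, hsumw]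
      simp
    have hR2 : ∑ i, ((fun i => -w i) i) ^ 2 = ∑ i, w i ^2 := by simp
    rw [hL, hR2, hgsum, ← hQdef] at hcs
    linarith
  have hrt : Real.sqrt (((n:ℝ)-1)/n) = Real.sqrt ((n:ℝ)-1) * sqn⁻¹ := by
    rw [Real.sqrt_div (by linarith : (0:ℝ) ≤ (n:ℝ)-1), ← hsqn, div_eq_mul_inv]
  obtain ⟨hlam0, hks⟩ := key_scalar hn hθ0 hθπ
  have hQ0 : 0 ≤ Q := Real.sqrt_nonneg _
  have hchain : lam θ n * (Q * Real.sqrt (((n:ℝ)-1)/n)) ≤ a * sqn⁻¹ := by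
    calc lam θ n * (Q * Real.sqrt (((n:ℝ)-1)/n))
        ≤ lam θ n * ((Nz * s) * Real.sqrt (((n:ℝ)-1)/n)) := by
          apply mul_le_mul_of_nonneg_left _ hlam0.le
          exact mul_le_mul_of_nonneg_right hQle (Real.sqrt_nonneg _)
      _ = (lam θ n * (Real.sqrt ((n:ℝ)-1) * s)) * (Nz * sqn⁻¹) := by
          rw [hrt]; ring
      _ ≤ c * (Nz * sqn⁻¹) := mul_le_mul_of_nonneg_right hks (by positivity)
      _ = (Nz * c) * sqn⁻¹ := by ring
      _ ≤ a * sqn⁻¹ := mul_le_mul_of_nonneg_right hNc (by positivity)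
  have hlw : -(a * sqn⁻¹) ≤ lam θ n * w j := by
    have h1 : lam θ n * (-(Q * Real.sqrt (((n:ℝ)-1)/n))) ≤ lam θ n * w j :=
      mul_le_mul_of_nonneg_left hwjlow hlam0.le
    have h2 : lam θ n * (-(Q * Real.sqrt (((n:ℝ)-1)/n)))
        = -(lam θ n * (Q * Real.sqrt (((n:ℝ)-1)/n))) := by ring
    linarith
  have hyj : y j = w j + a * sqn⁻¹ := by simp only [hw]; ring
  rw [hyj]
  have hexpand : lam θ n * (w j + a * sqn⁻¹) + (1 - lam θ n) * a * sqn⁻¹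
      = lam θ n * w j + a * sqn⁻¹ := by ring
  rw [hexpand]
  linarith

lemma coordProj_mulVec {m n : ℕ} (hmn : m ≤ n) (u : Fin n → ℝ) (i : Fin m) :
    (coordProj m n).mulVec u i = u (Fin.castLE hmn i) := by
  simp only [coordProj, Matrix.mulVec, dotProduct, Matrix.of_apply]
  have hterm : ∀ j : Fin n, (if (i:ℕ) = (j:ℕ) then (1:ℝ) else 0) * u j
      = if j = Fin.castLE hmn i then u j else 0 := by
    intro j
    by_cases hij : j = Fin.castLE hmn i
    · subst hij
      simp [Fin.castLE]
    · have hne : ¬ ((i:ℕ) = (j:ℕ)) := by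
        intro hc
        exact hij (Fin.ext (by simp [Fin.castLE, ← hc]))
      simp [hne, hij]
  rw [Finset.sum_congr rfl fun j _ => hterm j, Finset.sum_ite_eq' Finset.univ]
  simp

lemma wtr_right_inv {n : ℕ} {θ : ℝ} (hlam : lam θ n ≠ 0)
    (R Rt : Matrix (Fin n) (Fin n) ℝ)
    (hRtorth : Rtᵀ * Rt = 1) (hRtRt : Rt * Rtᵀ = 1) (hRR : R * Rᵀ = 1) :
    Wtheta Rt θ * (R * (Rᵀ * (Rt *
      Matrix.diagonal (fun i : Fin n => if (i : ℕ) = 0 then (1:ℝ) else (lam θ n)⁻¹) * Rtᵀ))) = 1 := by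
  rw [Wtheta]
  have hDD : Matrix.diagonal (fun i : Fin n => if (i : ℕ) = 0 then (1:ℝ) else lam θ n)
      * Matrix.diagonal (fun i : Fin n => if (i : ℕ) = 0 then (1:ℝ) else (lam θ n)⁻¹) = 1 := by
    have hvw : (fun i : Fin n => (if (i:ℕ) = 0 then (1:ℝ) else lam θ n)
        * (if (i:ℕ) = 0 then (1:ℝ) else (lam θ n)⁻¹)) = fun _ => (1:ℝ) := by
      funext i
      by_cases hi : (i:ℕ) = 0
      · simp [hi]
      · simp [hi, mul_inv_cancel₀ hlam]
    rw [Matrix.diagonal_mul_diagonal, hvw]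
    exact Matrix.diagonal_one
  calc Rt * Matrix.diagonal (fun i : Fin n => if (i : ℕ) = 0 then (1:ℝ) else lam θ n) * Rtᵀ
        * (R * (Rᵀ * (Rt * Matrix.diagonal (fun i : Fin n => if (i : ℕ) = 0 then (1:ℝ) else (lam θ n)⁻¹) * Rtᵀ)))
      = Rt * Matrix.diagonal (fun i : Fin n => if (i : ℕ) = 0 then (1:ℝ) else lam θ n) * (Rtᵀ
        * ((R * Rᵀ) * (Rt * Matrix.diagonal (fun i : Fin n => if (i : ℕ) = 0 then (1:ℝ) else (lam θ n)⁻¹) * Rtᵀ))) := by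
        simp only [Matrix.mul_assoc]
    _ = Rt * Matrix.diagonal (fun i : Fin n => if (i : ℕ) = 0 then (1:ℝ) else lam θ n) * ((Rtᵀ
        * Rt) * Matrix.diagonal (fun i : Fin n => if (i : ℕ) = 0 then (1:ℝ) else (lam θ n)⁻¹) * Rtᵀ) := by
        rw [hRR, Matrix.one_mul]
        simp only [Matrix.mul_assoc]
    _ = Rt * (Matrix.diagonal (fun i : Fin n => if (i : ℕ) = 0 then (1:ℝ) else lam θ n)
        * Matrix.diagonal (fun i : Fin n => if (i : ℕ) = 0 then (1:ℝ) else (lam θ n)⁻¹)) * Rtᵀ := by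
        rw [hRtorth, Matrix.one_mul]
        simp only [Matrix.mul_assoc]
    _ = Rt * Rtᵀ := by rw [hDD, Matrix.mul_one]
    _ = 1 := hRtRt

/-- with `W = P^{n→m} W_θ R` and `b = −Wp`, the matrix `W` is surjective and
the truncation map acts as `x ↦ (W⁺W)x` on the forward cone `p + C_θ[h]`. -/
theorem tau_id_on_forward_cone {n m : ℕ} (hm : 1 ≤ m) (hmn : m ≤ n)
    (p h : Fin n → ℝ) (hh : vnorm h = 1) (θ : ℝ) (hθ0 : 0 < θ) (hθπ : θ < Real.pi)
    (R Rt : Matrix (Fin n) (Fin n) ℝ)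
    (hRorth : Rᵀ * R = 1) (hRdet : R.det = 1)
    (hRtorth : Rtᵀ * Rt = 1) (hRtdet : Rt.det = 1)
    (hRh : R.mulVec h = fun _ => (Real.sqrt n)⁻¹)
    (hRte : Rt.mulVec (fun i : Fin n => if (i : ℕ) = 0 then (1 : ℝ) else 0)
      = fun _ => (Real.sqrt n)⁻¹) :
    Function.Surjective (coordProj m n * Wtheta Rt θ * R).mulVec ∧
    ∀ x : Fin n → ℝ, inCone θ h (x - p) →
      tau (coordProj m n * Wtheta Rt θ * R)
          (-((coordProj m n * Wtheta Rt θ * R).mulVec p)) x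
        = (pinv (coordProj m n * Wtheta Rt θ * R)
            * (coordProj m n * Wtheta Rt θ * R)).mulVec x := by
  have hn : 1 ≤ n := le_trans hm hmn
  have hRR : R * Rᵀ = 1 := mul_eq_one_comm.mp hRorth
  have hRtRt : Rt * Rtᵀ = 1 := mul_eq_one_comm.mp hRtorth
  obtain ⟨hlam0, -⟩ := key_scalar hn hθ0 hθπ
  constructor
  · -- surjectivity
    intro v
    set M := Rᵀ * (Rt *
      Matrix.diagonal (fun i : Fin n => if (i : ℕ) = 0 then (1:ℝ) else (lam θ n)⁻¹) * Rtᵀ)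
      with hM
    have hWM : Wtheta Rt θ * (R * M) = 1 := wtr_right_inv hlam0.ne' R Rt hRtorth hRtRt hRR
    set vext : Fin n → ℝ := fun j => if hj : (j:ℕ) < m then v ⟨(j:ℕ), hj⟩ else 0 with hvext
    refine ⟨M.mulVec vext, ?_⟩
    rw [Matrix.mulVec_mulVec]
    have hassoc : coordProj m n * Wtheta Rt θ * R * M = coordProj m n := by
      have h1 : coordProj m n * Wtheta Rt θ * R * M
          = coordProj m n * (Wtheta Rt θ * (R * M)) := by
        simp only [Matrix.mul_assoc]
      rw [h1, hWM, Matrix.mul_one]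
    rw [hassoc]
    funext i
    rw [coordProj_mulVec hmn]
    have hlt : ((Fin.castLE hmn i : Fin n) : ℕ) < m := i.isLt
    simp only [hvext, hlt, dif_pos]
    exact congrArg v (Fin.ext rfl)
  · -- the truncation identity
    intro x hx
    set W := coordProj m n * Wtheta Rt θ * R with hW
    have hnn : ∀ i : Fin m, 0 ≤ W.mulVec (x - p) i := by
      intro i
      have hcomp : W.mulVec (x - p) i
          = (Wtheta Rt θ * R).mulVec (x - p) (Fin.castLE hmn i) := by
        rw [hW, Matrix.mul_assoc, ← Matrix.mulVec_mulVec, coordProj_mulVec hmn]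
      rw [hcomp]
      exact wtr_nonneg hn h hh hθ0 hθπ R Rt hRorth hRtRt hRh hRte (x - p) hx _
    have hsub : W.mulVec x + -(W.mulVec p) = W.mulVec (x - p) := by
      rw [Matrix.mulVec_sub, sub_eq_add_neg]
    have hrelu : relu (W.mulVec x + -(W.mulVec p)) = W.mulVec x + -(W.mulVec p) := by
      funext i
      rw [relu]
      apply max_eq_left
      rw [hsub]
      exact hnn i
    rw [tau, hrelu, add_sub_cancel_right, Matrix.mulVec_mulVec]
end
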